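/- arXiv:1502.04325 — 6 statements merged into one kernel-verified Lean document; each statement's English description precedes it below -/
import Mathlib

section
/- Let K ⊂ Γ be a compact subset and β > 0 be such that ν_μ − 2β𝟙 ∈ Γ_m for every μ ∈ K, and let σ₀ ∈ ℝ satisfy σ₀ > sup_{∂Γ} f. Then there exists a constant ε > 0, depending only on m, f, K, β and σ₀, such that for every μ ∈ K and every λ ∈ Γ satisfying σ₀ ≤ f(λ) ≤ f(μ) and |ν_μ − ν_λ| ≥ β, one has ∑_{i=1}^m f_i(λ)(μ_i − λ_i) ≥ ε(1 + ∑_{i=1}^m f_i(λ)). -/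
open Filter Topology

/-- The `i`-th partial derivative `fᵢ(x) = ∂f/∂λᵢ(x)`. -/
noncomputable def pd {m : ℕ} (f : (Fin m → ℝ) → ℝ) (x : Fin m → ℝ) (i : Fin m) : ℝ :=
  fderiv ℝ f x (Pi.single i 1)

/-- The Euclidean norm of a vector in `ℝ^m`. -/
noncomputable def eNorm {m : ℕ} (v : Fin m → ℝ) : ℝ :=
  Real.sqrt (∑ i, (v i) ^ 2)

/-- The unit normal `ν_x = Df(x)/|Df(x)|`. -/
noncomputable def nuv {m : ℕ} (f : (Fin m → ℝ) → ℝ) (x : Fin m → ℝ) : Fin m → ℝ :=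
  fun i => pd f x i / eNorm (pd f x)

/-!
Put `w = ν_μ - ν_λ` and `x = μ + s w` for a small fixed `s > 0`. As `ν_μ` and `ν_λ` are unit
vectors, `⟨ν_μ, w⟩ = |w|² / 2 = -⟨ν_λ, w⟩`. Adding the tangent inequalities of the concave `f`
at `λ` (towards `x`) and at `x` (towards `μ`) gives
`Df(λ)·(μ - λ) ≥ f(μ) - f(λ) + s (Df(x)·w + |Df(λ)| |w|² / 2)`.
Uniform continuity of `Df` near the compact `K` makes `Df(x)·w` close to
`Df(μ)·w = |Df(μ)| |w|² / 2 ≥ (min_K |Df|) β² / 2`, and `|Df(λ)| ≥ ∑ fᵢ(λ) / m`.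
-/
theorem ConcaveOn.sub_le_fderiv_apply_sub {E : Type*} [NormedAddCommGroup E] [NormedSpace ℝ E]
    {s : Set E} {f : E → ℝ} (hf : ConcaveOn ℝ s f) {a b : E} (ha : a ∈ s) (hb : b ∈ s)
    (hfa : DifferentiableAt ℝ f a) :
    f b - f a ≤ fderiv ℝ f a (b - a) := by
  have hline : HasDerivAt (f ∘ AffineMap.lineMap (k := ℝ) a b) (fderiv ℝ f a (b - a)) 0 := by
    have hfa' : HasFDerivAt f (fderiv ℝ f a) (AffineMap.lineMap a b (0 : ℝ)) := by
      simpa using hfa.hasFDerivAt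
    exact hfa'.comp_hasDerivAt 0 AffineMap.hasDerivAt_lineMap
  simpa [slope] using (hf.comp_affineMap (AffineMap.lineMap a b)).slope_le_of_hasDerivAt
    (x := 0) (y := 1) (by simpa using ha) (by simpa using hb) one_pos hline

theorem ConcaveOn.sub_add_mul_sub_le_fderiv_apply_sub {E : Type*} [NormedAddCommGroup E]
    [NormedSpace ℝ E] {s : Set E} {f : E → ℝ} (hf : ConcaveOn ℝ s f) {a b w : E} {t : ℝ}
    (ha : a ∈ s) (hb : b ∈ s) (hbw : b + t • w ∈ s) (hfa : DifferentiableAt ℝ f a)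
    (hfbw : DifferentiableAt ℝ f (b + t • w)) :
    f b - f a + t * (fderiv ℝ f (b + t • w) w - fderiv ℝ f a w) ≤ fderiv ℝ f a (b - a) := by
  have htan_a := hf.sub_le_fderiv_apply_sub ha hbw hfa
  have htan_bw := hf.sub_le_fderiv_apply_sub hbw hb hfbw
  rw [show b + t • w - a = (b - a) + t • w by abel, map_add, map_smul, smul_eq_mul] at htan_a
  rw [show b - (b + t • w) = -(t • w) by abel, map_neg, map_smul, smul_eq_mul] at htan_bw
  linarith

theorem IsCompact.exists_pos_forall_dist_le {X Y : Type*} [PseudoMetricSpace X] [ProperSpace X]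
    [PseudoMetricSpace Y] {U K : Set X} {g : X → Y} (hK : IsCompact K) (hU : IsOpen U)
    (hKU : K ⊆ U) (hg : ContinuousOn g U) {η : ℝ} (hη : 0 < η) :
    ∃ r > 0, ∀ x ∈ K, ∀ y, dist y x ≤ r → y ∈ U ∧ dist (g y) (g x) ≤ η := by
  obtain ⟨ρ, hρ, hρU⟩ := hK.exists_cthickening_subset_open hU hKU
  obtain ⟨δ, hδ, hδg⟩ := Metric.uniformContinuousOn_iff_le.mp
    (hK.cthickening.uniformContinuousOn_of_continuous (hg.mono hρU)) η hη
  refine ⟨min ρ δ, lt_min hρ hδ, fun x hx y hxy => ?_⟩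
  have hy : y ∈ Metric.cthickening ρ K :=
    Metric.mem_cthickening_of_dist_le y x ρ K hx (hxy.trans (min_le_left _ _))
  exact ⟨hρU hy, hδg y hy x (Metric.self_subset_cthickening K hx) (hxy.trans (min_le_right _ _))⟩

section EuclideanNorm

variable {m : ℕ}

theorem sq_eNorm (v : Fin m → ℝ) : eNorm v ^ 2 = ∑ i, v i ^ 2 :=
  Real.sq_sqrt (Finset.sum_nonneg fun _ _ => sq_nonneg _)

theorem abs_le_eNorm (v : Fin m → ℝ) (i : Fin m) : |v i| ≤ eNorm v := by
  rw [← Real.sqrt_sq_eq_abs]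
  exact Real.sqrt_le_sqrt
    (Finset.single_le_sum (f := fun j => v j ^ 2) (fun j _ => sq_nonneg _) (Finset.mem_univ i))

theorem sum_le_card_mul_eNorm (v : Fin m → ℝ) : ∑ i, v i ≤ m * eNorm v := by
  calc ∑ i, v i ≤ ∑ _i : Fin m, eNorm v :=
        Finset.sum_le_sum fun i _ => (le_abs_self _).trans (abs_le_eNorm v i)
    _ = m * eNorm v := by simp

theorem eNorm_pos_of_forall_pos [NeZero m] {v : Fin m → ℝ} (hv : ∀ i, 0 < v i) :
    0 < eNorm v :=
  (hv 0).trans_le ((le_abs_self _).trans (abs_le_eNorm v 0))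

theorem continuous_eNorm : Continuous (eNorm : (Fin m → ℝ) → ℝ) :=
  Real.continuous_sqrt.comp (by fun_prop)

theorem norm_le_one_of_eNorm_eq_one {v : Fin m → ℝ} (hv : eNorm v = 1) : ‖v‖ ≤ 1 :=
  (pi_norm_le_iff_of_nonneg zero_le_one).2 fun i => hv ▸ abs_le_eNorm v i

theorem sum_mul_sub_eq_half_sq_eNorm {a b : Fin m → ℝ} (ha : eNorm a = 1) (hb : eNorm b = 1) :
    ∑ i, a i * (a - b) i = eNorm (a - b) ^ 2 / 2 := by
  have ha' := sq_eNorm a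
  have hb' := sq_eNorm b
  rw [ha, one_pow] at ha'
  rw [hb, one_pow] at hb'
  have hab : eNorm (a - b) ^ 2 = ∑ i, a i ^ 2 + ∑ i, b i ^ 2 - 2 * ∑ i, a i * b i := by
    rw [sq_eNorm, Finset.mul_sum, ← Finset.sum_add_distrib, ← Finset.sum_sub_distrib]
    exact Finset.sum_congr rfl fun i _ => by simp only [Pi.sub_apply]; ring
  have hasub : ∑ i, a i * (a - b) i = ∑ i, a i ^ 2 - ∑ i, a i * b i := by
    rw [← Finset.sum_sub_distrib]
    exact Finset.sum_congr rfl fun i _ => by simp only [Pi.sub_apply]; ring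
  rw [hasub, hab, ← ha', ← hb']
  ring

theorem sum_mul_sub_eq_neg_half_sq_eNorm {a b : Fin m → ℝ} (ha : eNorm a = 1)
    (hb : eNorm b = 1) : ∑ i, b i * (a - b) i = -(eNorm (a - b) ^ 2 / 2) := by
  have hsplit : ∑ i, b i * (a - b) i = ∑ i, a i * (a - b) i - ∑ i, (a - b) i ^ 2 := by
    rw [← Finset.sum_sub_distrib]
    exact Finset.sum_congr rfl fun i _ => by simp only [Pi.sub_apply]; ring
  rw [hsplit, sum_mul_sub_eq_half_sq_eNorm ha hb, ← sq_eNorm]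
  ring

end EuclideanNorm

section UnitNormal

variable {m : ℕ} {Γ : Set (Fin m → ℝ)} {f : (Fin m → ℝ) → ℝ} {y : Fin m → ℝ}

theorem fderiv_apply_eq_sum_pd_mul (f : (Fin m → ℝ) → ℝ) (y v : Fin m → ℝ) :
    fderiv ℝ f y v = ∑ i, pd f y i * v i := by
  classical
  conv_lhs => rw [pi_eq_sum_univ' v, map_sum]
  simp [pd, mul_comm]

theorem continuousOn_pd (hf : ContinuousOn (fderiv ℝ f) Γ) :
    ContinuousOn (pd f) Γ :=
  continuousOn_pi.2 fun _ => hf.clm_apply continuousOn_const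

theorem eNorm_nuv (hy : 0 < eNorm (pd f y)) : eNorm (nuv f y) = 1 := by
  have h : nuv f y = (eNorm (pd f y))⁻¹ • pd f y := by
    funext i; simp [nuv, div_eq_inv_mul]
  rw [eNorm, h]
  simp only [Pi.smul_apply, smul_eq_mul, mul_pow, ← Finset.mul_sum, ← sq_eNorm]
  rw [inv_pow, inv_mul_cancel₀ (by positivity), Real.sqrt_one]

theorem fderiv_apply_eq_eNorm_mul_sum_nuv (hy : 0 < eNorm (pd f y)) (v : Fin m → ℝ) :
    fderiv ℝ f y v = eNorm (pd f y) * ∑ i, nuv f y i * v i := by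
  rw [fderiv_apply_eq_sum_pd_mul, Finset.mul_sum]
  exact Finset.sum_congr rfl fun i _ => by rw [nuv]; field_simp

theorem norm_nuv_sub_nuv_le_two {y z : Fin m → ℝ} (hy : 0 < eNorm (pd f y))
    (hz : 0 < eNorm (pd f z)) : ‖nuv f y - nuv f z‖ ≤ 2 := by
  have := norm_le_one_of_eNorm_eq_one (eNorm_nuv hy)
  have := norm_le_one_of_eNorm_eq_one (eNorm_nuv hz)
  linarith [norm_sub_le (nuv f y) (nuv f z)]

theorem le_sum_pd_mul_sub (hΓ : IsOpen Γ) (hfd : DifferentiableOn ℝ f Γ)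
    (hf : ConcaveOn ℝ Γ f) {μ lam : Fin m → ℝ} (hμ : μ ∈ Γ) (hlam : lam ∈ Γ)
    (hDμ : 0 < eNorm (pd f μ)) (hDlam : 0 < eNorm (pd f lam)) {s η : ℝ}
    (hs : 0 ≤ s) (hx : μ + s • (nuv f μ - nuv f lam) ∈ Γ)
    (hη : ‖fderiv ℝ f (μ + s • (nuv f μ - nuv f lam)) - fderiv ℝ f μ‖ ≤ η) :
    f μ - f lam + s * ((eNorm (pd f μ) + eNorm (pd f lam)) * eNorm (nuv f μ - nuv f lam) ^ 2 / 2
      - 2 * η) ≤ ∑ i, pd f lam i * (μ i - lam i) := by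
  set w := nuv f μ - nuv f lam
  have hwμ : fderiv ℝ f μ w = eNorm (pd f μ) * (eNorm w ^ 2 / 2) := by
    rw [fderiv_apply_eq_eNorm_mul_sum_nuv hDμ,
      sum_mul_sub_eq_half_sq_eNorm (eNorm_nuv hDμ) (eNorm_nuv hDlam)]
  have hwlam : fderiv ℝ f lam w = -(eNorm (pd f lam) * (eNorm w ^ 2 / 2)) := by
    rw [fderiv_apply_eq_eNorm_mul_sum_nuv hDlam,
      sum_mul_sub_eq_neg_half_sq_eNorm (eNorm_nuv hDμ) (eNorm_nuv hDlam), mul_neg]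
  have hw : ‖w‖ ≤ 2 := norm_nuv_sub_nuv_le_two hDμ hDlam
  have hwx : fderiv ℝ f μ w - 2 * η ≤ fderiv ℝ f (μ + s • w) w := by
    have h := (neg_le_abs _).trans ((fderiv ℝ f (μ + s • w) - fderiv ℝ f μ).le_opNorm w)
    have hDw := mul_le_mul hη hw (norm_nonneg w) ((norm_nonneg _).trans hη)
    rw [sub_apply] at h
    linarith
  have key := hf.sub_add_mul_sub_le_fderiv_apply_sub hlam hμ hx
    (hfd.differentiableAt (hΓ.mem_nhds hlam)) (hfd.differentiableAt (hΓ.mem_nhds hx))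
  rw [fderiv_apply_eq_sum_pd_mul f lam (μ - lam), hwlam] at key
  have hsx := mul_le_mul_of_nonneg_left hwx hs
  rw [hwμ] at hsx
  simp only [Pi.sub_apply] at key
  linarith

theorem le_sum_pd_mul_sub_of_forall_dist_le (hΓ : IsOpen Γ) (hfd : DifferentiableOn ℝ f Γ)
    (hf : ConcaveOn ℝ Γ f) (hD : ∀ y ∈ Γ, 0 < eNorm (pd f y)) {μ lam : Fin m → ℝ} (hμ : μ ∈ Γ)
    (hlam : lam ∈ Γ) {g β s : ℝ} (hg : g ≤ eNorm (pd f μ)) (hβ : 0 ≤ β)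
    (hβw : β ≤ eNorm (nuv f μ - nuv f lam)) (hflam : f lam ≤ f μ) (hs : 0 ≤ s)
    (hnear : ∀ y, dist y μ ≤ 2 * s → y ∈ Γ ∧ dist (fderiv ℝ f y) (fderiv ℝ f μ) ≤ g * β ^ 2 / 8) :
    s * (g * β ^ 2 / 4) + s * β ^ 2 / (2 * m) * ∑ i, pd f lam i
      ≤ ∑ i, pd f lam i * (μ i - lam i) := by
  set w := nuv f μ - nuv f lam
  set S := ∑ i, pd f lam i
  have hgrad : (g + S / m) * β ^ 2 ≤ (eNorm (pd f μ) + eNorm (pd f lam)) * eNorm w ^ 2 := by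
    have hSD : S / m ≤ eNorm (pd f lam) := div_le_of_le_mul₀ (Nat.cast_nonneg m)
      (Real.sqrt_nonneg _) ((sum_le_card_mul_eNorm _).trans_eq (mul_comm _ _))
    exact mul_le_mul (add_le_add hg hSD) (pow_le_pow_left₀ hβ hβw 2) (sq_nonneg β)
      (add_pos (hD μ hμ) (hD lam hlam)).le
  obtain ⟨hx, hη⟩ := hnear (μ + s • w) (by
    rw [dist_eq_norm, add_sub_cancel_left, norm_smul, Real.norm_of_nonneg hs]
    linarith [mul_le_mul_of_nonneg_left (norm_nuv_sub_nuv_le_two (hD μ hμ) (hD lam hlam)) hs])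
  rw [dist_eq_norm] at hη
  have hest := le_sum_pd_mul_sub hΓ hfd hf hμ hlam (hD μ hμ) (hD lam hlam) hs hx hη
  calc s * (g * β ^ 2 / 4) + s * β ^ 2 / (2 * m) * S
      = s * ((g + S / m) * β ^ 2 / 2 - 2 * (g * β ^ 2 / 8)) := by ring
    _ ≤ s * ((eNorm (pd f μ) + eNorm (pd f lam)) * eNorm w ^ 2 / 2 - 2 * (g * β ^ 2 / 8)) := by
        gcongr
    _ ≤ ∑ i, pd f lam i * (μ i - lam i) := by linarith

end UnitNormal

theorem stmt_0_general (m : ℕ)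
    (Γ : Set (Fin m → ℝ)) (f : (Fin m → ℝ) → ℝ)
    (hΓopen : IsOpen Γ)
    (hfsmooth : ContDiffOn ℝ (⊤ : ℕ∞) f Γ)
    (hf1 : ∀ x ∈ Γ, ∀ i, 0 < pd f x i)
    (hf2 : ConcaveOn ℝ Γ f)
    (K : Set (Fin m → ℝ)) (hK : IsCompact K) (hKΓ : K ⊆ Γ)
    (β : ℝ) (hβ : 0 < β)
    (σ₀ : ℝ) :
    ∃ ε : ℝ, 0 < ε ∧ ∀ μ ∈ K, ∀ lam ∈ Γ, σ₀ ≤ f lam → f lam ≤ f μ →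
      β ≤ eNorm (fun i => nuv f μ i - nuv f lam i) →
      ∑ i, pd f lam i * (μ i - lam i) ≥ ε * (1 + ∑ i, pd f lam i) := by
  obtain rfl | hm := Nat.eq_zero_or_pos m
  · refine ⟨1, one_pos, fun μ _ lam _ _ _ hw => absurd hw ?_⟩
    simpa [eNorm] using hβ
  have : NeZero m := ⟨hm.ne'⟩
  have hD : ∀ y ∈ Γ, 0 < eNorm (pd f y) := fun y hy => eNorm_pos_of_forall_pos (hf1 y hy)
  have hf' := hfsmooth.continuousOn_fderiv_of_isOpen hΓopen (by simp)
  obtain ⟨g, hg, hgK⟩ := hK.exists_forall_le'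
    (continuous_eNorm.comp_continuousOn ((continuousOn_pd hf').mono hKΓ))
    fun μ hμ => hD μ (hKΓ hμ)
  obtain ⟨r, hr, hrK⟩ := hK.exists_pos_forall_dist_le hΓopen hKΓ hf' (η := g * β ^ 2 / 8)
    (by positivity)
  refine ⟨min (r / 2 * (g * β ^ 2 / 4)) (r / 2 * β ^ 2 / (2 * m)), by positivity, ?_⟩
  intro μ hμ lam hlam _ hflam hβw
  have hS : 0 ≤ ∑ i, pd f lam i := Finset.sum_nonneg fun i _ => (hf1 lam hlam i).le
  have key := le_sum_pd_mul_sub_of_forall_dist_le hΓopen (hfsmooth.differentiableOn (by simp))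
    hf2 hD (hKΓ hμ) hlam (hgK μ hμ) hβ.le hβw hflam (s := r / 2) (by positivity)
    fun y hy => hrK μ hμ y (by linarith)
  nlinarith [min_le_left (r / 2 * (g * β ^ 2 / 4)) (r / 2 * β ^ 2 / (2 * m)),
    min_le_right (r / 2 * (g * β ^ 2 / 4)) (r / 2 * β ^ 2 / (2 * m))]

/-- Lemma 2.1 / Guan: given a compact `K ⊂ Γ`, `β > 0` with
`ν_μ - 2β·𝟙 ∈ Γ_m` for all `μ ∈ K`, and `σ₀ > sup_{∂Γ} f`, there is `ε > 0` such that
for all `μ ∈ K`, `λ ∈ Γ` with `σ₀ ≤ f(λ) ≤ f(μ)` and `|ν_μ - ν_λ| ≥ β` one has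
`∑ fᵢ(λ)(μᵢ - λᵢ) ≥ ε (1 + ∑ fᵢ(λ))`. -/
theorem stmt_0 (m : ℕ) (hm : 2 ≤ m)
    (Γ : Set (Fin m → ℝ)) (f : (Fin m → ℝ) → ℝ)
    (hΓopen : IsOpen Γ) (hΓconv : Convex ℝ Γ) (hΓne : Γ.Nonempty)
    (hΓproper : Γ ≠ Set.univ)
    (hΓcone : ∀ t : ℝ, 0 < t → ∀ x ∈ Γ, t • x ∈ Γ)
    (hΓperm : ∀ π : Equiv.Perm (Fin m), ∀ x ∈ Γ, x ∘ π ∈ Γ)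
    (hΓpos : {x : Fin m → ℝ | ∀ i, 0 < x i} ⊆ Γ)
    (hfsmooth : ContDiffOn ℝ (⊤ : ℕ∞) f Γ)
    (hfsymm : ∀ π : Equiv.Perm (Fin m), ∀ x ∈ Γ, f (x ∘ π) = f x)
    (hf1 : ∀ x ∈ Γ, ∀ i, 0 < pd f x i)
    (hf2 : ConcaveOn ℝ Γ f)
    (K : Set (Fin m → ℝ)) (hK : IsCompact K) (hKΓ : K ⊆ Γ)
    (β : ℝ) (hβ : 0 < β)
    (hνK : ∀ μ ∈ K, ∀ i, 2 * β < nuv f μ i)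
    (σ₀ : ℝ)
    (hσ₀ : ∃ σ' < σ₀, ∀ x₀ ∈ frontier Γ, ∀ u : ℕ → Fin m → ℝ,
        (∀ k, u k ∈ Γ) → Tendsto u atTop (𝓝 x₀) →
        Filter.limsup (fun k => f (u k)) atTop ≤ σ') :
    ∃ ε : ℝ, 0 < ε ∧ ∀ μ ∈ K, ∀ lam ∈ Γ, σ₀ ≤ f lam → f lam ≤ f μ →
      β ≤ eNorm (fun i => nuv f μ i - nuv f lam i) →
      ∑ i, pd f lam i * (μ i - lam i) ≥ ε * (1 + ∑ i, pd f lam i) :=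
  stmt_0_general m Γ f hΓopen hfsmooth hf1 hf2 K hK hKΓ β hβ σ₀
end

section
/- Let Ω ⊆ ℝ^m be an open set invariant under permutations of the coordinates, and let f : Ω → ℝ be a C² symmetric function (invariant under permutations of the coordinates). Let λ ∈ Ω have pairwise distinct entries and set A := diag(λ₁,…,λ_m) ∈ Sym_m. Then the function F(B) := f(λ(B)), defined for B in a neighborhood of A in Sym_m, is twice differentiable at A, and for every η ∈ Sym_m its second derivative satisfies D²F(A)[η, η] = ∑_{i,j=1}^m (∂²f/∂λ_i∂λ_j)(λ) η_{ii} η_{jj} + ∑_{i ≠ j} ((f_i(λ) − f_j(λ))/(λ_i − λ_j)) η_{ij}², where f_i := ∂f/∂λ_i. -/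
open Filter Topology Matrix

attribute [local instance] Matrix.normedAddCommGroup Matrix.normedSpace

/-- The real vector space `Sym_m` of symmetric `m × m` real matrices, as a submodule of
the space of all `m × m` real matrices. -/
def SymMat (m : ℕ) : Submodule ℝ (Matrix (Fin m) (Fin m) ℝ) where
  carrier := {A | A.IsSymm}
  add_mem' := fun {A B} hA hB => by
    simp only [Set.mem_setOf_eq, Matrix.IsSymm, Matrix.transpose_add] at *
    rw [hA, hB]
  zero_mem' := by simp [Matrix.IsSymm]
  smul_mem' := fun c A hA => by
    simp only [Set.mem_setOf_eq, Matrix.IsSymm, Matrix.transpose_smul] at *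
    rw [hA]

/-- A real symmetric matrix is Hermitian. -/
theorem IsSymm.isHermitianR {m : ℕ} {A : Matrix (Fin m) (Fin m) ℝ} (hA : A.IsSymm) :
    A.IsHermitian := by
  rw [Matrix.IsHermitian, Matrix.conjTranspose_eq_transpose_of_trivial]
  exact hA

/-- The eigenvalue vector `λ(A) ∈ ℝ^m` of a symmetric matrix `A ∈ Sym_m` (the eigenvalues
repeated according to multiplicity). -/
noncomputable def eigVec {m : ℕ} (A : SymMat m) : Fin m → ℝ :=
  (IsSymm.isHermitianR A.2).eigenvalues

/-- The second partial derivative `∂²f/∂λᵢ∂λⱼ(x)`. -/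
noncomputable def pd2 {m : ℕ} (f : (Fin m → ℝ) → ℝ) (x : Fin m → ℝ) (i j : Fin m) : ℝ :=
  fderiv ℝ (fun y => fderiv ℝ f y (Pi.single j 1)) x (Pi.single i 1)

/-!
Since the entries of `λ` are distinct, the implicit function theorem applied to
`(B, v, μ) ↦ (B v - μ v, v ⬝ᵥ v - 1)` at `(diag λ, eᵢ, λᵢ)` yields `C²` branches `μᵢ(B)` of
eigenvalues near `diag λ`. Near `A` these are `m` distinct eigenvalues of `B`, hence a permutation
of `λ(B)`, so `F = f ∘ μ` there by symmetry of `f`. Along `B = diag λ + s η`, differentiating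
`B v = μ v`, `v ⬝ᵥ v = 1` gives `μᵢ' = v ⬝ᵥ η v` (Hellmann–Feynman) and
`vᵢ'(0)ₖ = ηₖᵢ / (λᵢ - λₖ)`, hence `μᵢ''(0) = 2 ∑ₖ ηᵢₖ² / (λᵢ - λₖ)`. The second-order chain rule
for `f ∘ μ` and a symmetrization of the last sum give the formula.
-/

section Curves

variable {E F : Type*} [NormedAddCommGroup E] [NormedSpace ℝ E] [NormedAddCommGroup F]
  [NormedSpace ℝ F]

theorem hasDerivAt_add_smul (x v : E) (s : ℝ) : HasDerivAt (fun t : ℝ => x + t • v) v s :=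
  (((hasDerivAt_id s).smul_const v).const_add x).congr_deriv (one_smul ℝ v)

theorem tendsto_add_smul_nhds_zero (x v : E) :
    Tendsto (fun t : ℝ => x + t • v) (𝓝 0) (𝓝 x) := by
  simpa using (hasDerivAt_add_smul x v 0).continuousAt.tendsto

theorem ContDiffAt.comp_add_smul {G : E → F} {a : E} (hG : ContDiffAt ℝ 2 G a) (v : E) :
    ContDiffAt ℝ 2 (fun s : ℝ => G (a + s • v)) 0 :=
  ContDiffAt.comp (g := G) (0 : ℝ) (by simpa using hG) (by fun_prop)

theorem ContDiffAt.deriv_deriv_comp {f : E → F} {h : ℝ → E} {s : ℝ}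
    (hf : ContDiffAt ℝ 2 f (h s)) (hh : ContDiffAt ℝ 2 h s) :
    deriv (deriv fun t => f (h t)) s =
      fderiv ℝ (fderiv ℝ f) (h s) (deriv h s) (deriv h s) +
        fderiv ℝ f (h s) (deriv (deriv h) s) := by
  have hfirst : deriv (fun t => f (h t)) =ᶠ[𝓝 s] fun t => fderiv ℝ f (h t) (deriv h t) := by
    filter_upwards [hh.continuousAt.eventually (hf.eventually (by simp)), hh.eventually (by simp)]
      with t hft hht
    exact fderiv_comp_deriv t (hft.differentiableAt two_ne_zero) (hht.differentiableAt two_ne_zero)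
  have hdf : HasFDerivAt (fderiv ℝ f) (fderiv ℝ (fderiv ℝ f) (h s)) (h s) :=
    ((hf.fderiv_right (m := 1) le_rfl).differentiableAt one_ne_zero).hasFDerivAt
  have hdh : HasDerivAt (deriv h) (deriv (deriv h) s) s :=
    ((hh.derivWithin (m := 1) le_rfl).differentiableAt one_ne_zero).hasDerivAt
  rw [hfirst.deriv_eq]
  exact ((hdf.comp_hasDerivAt s (hh.differentiableAt two_ne_zero).hasDerivAt).clm_apply hdh).deriv

theorem ContDiffAt.fderiv_fderiv_apply_eq_deriv_deriv {G : E → F} {a : E}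
    (hG : ContDiffAt ℝ 2 G a) (v : E) :
    fderiv ℝ (fderiv ℝ G) a v v = deriv (deriv fun s : ℝ => G (a + s • v)) 0 := by
  have hd : deriv (fun s : ℝ => a + s • v) = fun _ => v :=
    funext fun s => (hasDerivAt_add_smul a v s).deriv
  have hline : ContDiffAt ℝ 2 (fun s : ℝ => a + s • v) 0 := by fun_prop
  rw [ContDiffAt.deriv_deriv_comp (by simpa using hG) hline, hd]
  simp

end Curves

section DotProduct

variable {n : Type*} [Fintype n] {s : ℝ}

theorem HasDerivAt.dotProduct {a b : ℝ → n → ℝ} {a' b' : n → ℝ}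
    (ha : HasDerivAt a a' s) (hb : HasDerivAt b b' s) :
    HasDerivAt (fun t => a t ⬝ᵥ b t) (a' ⬝ᵥ b s + a s ⬝ᵥ b') s := by
  simp only [_root_.dotProduct, ← Finset.sum_add_distrib]
  exact HasDerivAt.fun_sum fun k _ => (hasDerivAt_pi.mp ha k).mul (hasDerivAt_pi.mp hb k)

theorem HasDerivAt.mulVec {P : ℝ → Matrix n n ℝ} {b : ℝ → n → ℝ} {P' : Matrix n n ℝ}
    {b' : n → ℝ} (hP : HasDerivAt P P' s) (hb : HasDerivAt b b' s) :
    HasDerivAt (fun t => P t *ᵥ b t) (P' *ᵥ b s + P s *ᵥ b') s :=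
  hasDerivAt_pi.mpr fun k => (hasDerivAt_pi.mp hP k).dotProduct hb

theorem HasDerivAt.dotProduct_self_eq_zero {w : ℝ → n → ℝ} {w' : n → ℝ}
    (hw : HasDerivAt w w' s) (hunit : ∀ᶠ t in 𝓝 s, w t ⬝ᵥ w t = 1) : w s ⬝ᵥ w' = 0 := by
  have h := (hw.dotProduct hw).unique ((hasDerivAt_const s (1 : ℝ)).congr_of_eventuallyEq hunit)
  rw [dotProduct_comm w'] at h
  linarith

theorem Matrix.IsSymm.dotProduct_mulVec_comm {M : Matrix n n ℝ} (hM : M.IsSymm) (x y : n → ℝ) :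
    x ⬝ᵥ (M *ᵥ y) = (M *ᵥ x) ⬝ᵥ y := by
  rw [dotProduct_mulVec, ← mulVec_transpose, hM, dotProduct_comm]

end DotProduct

theorem ContinuousLinearMap.isInvertible_of_injective {E : Type*} [NormedAddCommGroup E]
    [NormedSpace ℝ E] [FiniteDimensional ℝ E] (f : E →L[ℝ] E) (hf : Function.Injective f) :
    f.IsInvertible :=
  ⟨(LinearEquiv.ofInjectiveEndo (f : E →ₗ[ℝ] E) hf).toContinuousLinearEquiv, rfl⟩

theorem ContinuousLinearMap.apply_eq_sum_smul_single {ι F : Type*} [Fintype ι] [DecidableEq ι]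
    [AddCommGroup F] [Module ℝ F] [TopologicalSpace F] (φ : (ι → ℝ) →L[ℝ] F) (y : ι → ℝ) :
    φ y = ∑ i, y i • φ (Pi.single i 1) := by
  conv_lhs => rw [pi_eq_sum_univ' y]
  simp only [map_sum, map_smul]

theorem ContinuousAt.eventually_injective {X Y ι : Type*} [TopologicalSpace X]
    [TopologicalSpace Y] [T2Space Y] [Finite ι] {g : X → ι → Y} {x : X} (hg : ContinuousAt g x)
    (hinj : Function.Injective (g x)) : ∀ᶠ y in 𝓝 x, Function.Injective (g y) := by
  have hcoord (k : ι) : ContinuousAt (fun y => g y k) x :=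
    (continuous_apply k).continuousAt.comp hg
  have hne : ∀ᶠ y in 𝓝 x, ∀ i j, i ≠ j → g y i ≠ g y j := by
    refine eventually_all.mpr fun i => eventually_all.mpr fun j => ?_
    by_cases hij : i = j
    · exact Eventually.of_forall fun _ h => absurd hij h
    · exact ((hcoord i).ne_iff_eventually_ne (hcoord j)).mp (hinj.ne hij) |>.mono fun _ h _ => h
  filter_upwards [hne] with y hy i j hij
  by_contra h
  exact hy i j h hij

section Spectrum

variable {n : Type*} [Fintype n] [DecidableEq n]

theorem Matrix.mem_spectrum_of_mulVec_eq_smul {B : Matrix n n ℝ} {c : ℝ} {x : n → ℝ}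
    (hx : x ≠ 0) (hBx : B *ᵥ x = c • x) : c ∈ spectrum ℝ B := by
  rw [← spectrum_toLin']
  exact (Module.End.hasEigenvalue_of_hasEigenvector
    ⟨Module.End.mem_eigenspace_iff.mpr (by simpa using hBx), hx⟩).mem_spectrum

theorem Matrix.IsHermitian.exists_perm_eigenvalues_eq_comp {B : Matrix n n ℝ}
    (hB : B.IsHermitian) {μ : n → ℝ} (hμ : Function.Injective μ)
    (hspec : ∀ i, μ i ∈ spectrum ℝ B) : ∃ σ : Equiv.Perm n, hB.eigenvalues = μ ∘ σ := by
  simp only [hB.spectrum_real_eq_range_eigenvalues, Set.mem_range] at hspec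
  choose τ hτ using hspec
  have hτ_inj : Function.Injective τ := fun a b hab => hμ (by rw [← hτ a, ← hτ b, hab])
  set e := Equiv.ofBijective τ (Finite.injective_iff_bijective.mp hτ_inj)
  refine ⟨e.symm, funext fun k => ?_⟩
  simp only [Function.comp_apply, ← hτ]
  exact congrArg hB.eigenvalues (e.apply_symm_apply k).symm

end Spectrum

section EigenpairCurve

variable {n : Type*} [Fintype n] {s : ℝ} {L : ℝ → Matrix n n ℝ} {w : ℝ → n → ℝ} {h : ℝ → ℝ}
  {L' : Matrix n n ℝ} {w' : n → ℝ} {h' : ℝ}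

theorem eigenpair_deriv_eq (hL : HasDerivAt L L' s) (hw : HasDerivAt w w' s)
    (hh : HasDerivAt h h' s) (heig : ∀ᶠ t in 𝓝 s, L t *ᵥ w t = h t • w t) :
    L' *ᵥ w s + L s *ᵥ w' = h' • w s + h s • w' := by
  have hmulVec := (hL.mulVec hw).congr_of_eventuallyEq (heig.mono fun _ ht => ht.symm)
  rw [← add_comm (h s • w')]
  exact hmulVec.unique (hh.smul hw)

theorem eigenvalue_deriv_eq_dotProduct_mulVec (hL : HasDerivAt L L' s)
    (hw : HasDerivAt w w' s) (hh : HasDerivAt h h' s) (hsymm : (L s).IsSymm)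
    (heig : ∀ᶠ t in 𝓝 s, L t *ᵥ w t = h t • w t) (hunit : ∀ᶠ t in 𝓝 s, w t ⬝ᵥ w t = 1) :
    h' = w s ⬝ᵥ (L' *ᵥ w s) := by
  -- pairing with `w s`, the terms in `w'` cancel because `L s` is symmetric
  have hD := congrArg (w s ⬝ᵥ ·) (eigenpair_deriv_eq hL hw hh heig)
  simp only [dotProduct_add, dotProduct_smul, smul_eq_mul] at hD
  rw [hsymm.dotProduct_mulVec_comm, heig.self_of_nhds, smul_dotProduct, smul_eq_mul,
    hunit.self_of_nhds] at hD
  linarith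

end EigenpairCurve

section EigenpairLine

variable {n : Type*} [Fintype n] {M η : Matrix n n ℝ} {v : Matrix n n ℝ → n → ℝ}
  {μ : Matrix n n ℝ → ℝ}

theorem eventually_hasDerivAt_eigenvalue_line (hM : M.IsSymm) (hη : η.IsSymm)
    (hv : ContDiffAt ℝ 2 v M) (hμ : ContDiffAt ℝ 2 μ M)
    (heig : ∀ᶠ B in 𝓝 M, B *ᵥ v B = μ B • v B ∧ v B ⬝ᵥ v B = 1) :
    ∀ᶠ s in 𝓝 (0 : ℝ), HasDerivAt (fun t => μ (M + t • η))
      (v (M + s • η) ⬝ᵥ (η *ᵥ v (M + s • η))) s := by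
  have hline := tendsto_add_smul_nhds_zero M η
  filter_upwards [hline.eventually (hv.eventually (by simp)),
    hline.eventually (hμ.eventually (by simp)),
    eventually_eventually_nhds.mpr (hline.eventually heig)] with s hvs hμs hs
  have hw : HasDerivAt (fun t => v (M + t • η)) _ s :=
    (hvs.differentiableAt two_ne_zero).hasFDerivAt.comp_hasDerivAt s (hasDerivAt_add_smul M η s)
  have hh : HasDerivAt (fun t => μ (M + t • η)) _ s :=
    (hμs.differentiableAt two_ne_zero).hasFDerivAt.comp_hasDerivAt s (hasDerivAt_add_smul M η s)
  convert hh using 1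
  exact (eigenvalue_deriv_eq_dotProduct_mulVec (hasDerivAt_add_smul M η s) hw hh
    (hM.add (hη.smul s)) (hs.mono fun _ ht => ht.1) (hs.mono fun _ ht => ht.2)).symm

variable [DecidableEq n] {lam : n → ℝ}

/-- For `k = i` the right-hand side is `η i i / 0 = 0`, which is the `i`-th coordinate by `horth`. -/
theorem eigenvector_deriv_eq_of_diagonal (hlam : Function.Injective lam) {i : n} {w' : n → ℝ}
    {c : ℝ} (hD : η *ᵥ Pi.single i 1 + diagonal lam *ᵥ w' = c • Pi.single i 1 + lam i • w')
    (horth : Pi.single i 1 ⬝ᵥ w' = 0) :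
    w' = fun k => η k i / (lam i - lam k) := by
  funext k
  by_cases hk : k = i
  · subst hk
    simpa using horth
  · have hDk := congrFun hD k
    simp only [mulVec_single, MulOpposite.op_one, one_smul, Pi.add_apply, col_apply,
      mulVec_diagonal, Pi.smul_apply, ne_eq, hk, not_false_eq_true, Pi.single_eq_of_ne,
      smul_eq_mul, mul_zero, zero_add] at hDk
    have hne : lam i - lam k ≠ 0 := sub_ne_zero.mpr (hlam.ne (Ne.symm hk))
    field_simp
    linarith

theorem hasDerivAt_eigenvalue_line_diagonal (hlam : Function.Injective lam) (hη : η.IsSymm)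
    {i : n} (hv : ContDiffAt ℝ 2 v (diagonal lam)) (hμ : ContDiffAt ℝ 2 μ (diagonal lam))
    (hv0 : v (diagonal lam) = Pi.single i 1) (hμ0 : μ (diagonal lam) = lam i)
    (heig : ∀ᶠ B in 𝓝 (diagonal lam), B *ᵥ v B = μ B • v B ∧ v B ⬝ᵥ v B = 1) :
    HasDerivAt (fun s : ℝ => μ (diagonal lam + s • η)) (η i i) 0 ∧
      HasDerivAt (deriv fun s : ℝ => μ (diagonal lam + s • η))
        (∑ k, 2 * η i k ^ 2 / (lam i - lam k)) 0 := by
  have hHF := eventually_hasDerivAt_eigenvalue_line (isSymm_diagonal lam) hη hv hμ heig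
  have hline := (tendsto_add_smul_nhds_zero (diagonal lam) η).eventually heig
  have hw : HasDerivAt (fun t : ℝ => v (diagonal lam + t • η)) (fderiv ℝ v (diagonal lam) η) 0 :=
    (hv.differentiableAt two_ne_zero).hasFDerivAt.comp_hasDerivAt_of_eq 0
      (hasDerivAt_add_smul _ η 0) (by simp)
  have hμ' : HasDerivAt (fun s : ℝ => μ (diagonal lam + s • η)) (η i i) 0 := by
    simpa [hv0, mulVec_single] using hHF.self_of_nhds
  have hD :=
    eigenpair_deriv_eq (hasDerivAt_add_smul _ η 0) hw hμ' (hline.mono fun _ ht => ht.1)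
  have horth := hw.dotProduct_self_eq_zero (hline.mono fun _ ht => ht.2)
  simp only [zero_smul, add_zero, hv0, hμ0] at hD horth
  have hw' := eigenvector_deriv_eq_of_diagonal hlam hD horth
  refine ⟨hμ', ?_⟩
  have hderiv := hw.dotProduct ((hasDerivAt_const 0 η).mulVec hw)
  refine (hderiv.congr_of_eventuallyEq (hHF.mono fun _ hs => hs.deriv)).congr_deriv ?_
  simp only [zero_smul, add_zero, hv0]
  rw [hw', zero_mulVec, zero_add, single_dotProduct, one_mul, mulVec_single_one]
  simp only [dotProduct, mulVec, col_apply, ← Finset.sum_add_distrib]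
  refine Finset.sum_congr rfl fun k _ => ?_
  rw [hη.apply i k]
  ring

end EigenpairLine

def eigenEquation (n : Type*) [Fintype n] :
    Matrix n n ℝ × ((n → ℝ) × ℝ) → (n → ℝ) × ℝ :=
  fun p => (p.1 *ᵥ p.2.1 - p.2.2 • p.2.1, p.2.1 ⬝ᵥ p.2.1 - 1)

section EigenvalueBranches

variable {n : Type*} [Fintype n]

theorem contDiff_eigenEquation : ContDiff ℝ 2 (eigenEquation n) := by
  have hmulVec : ContDiff ℝ 2 fun q : Matrix n n ℝ × (n → ℝ) => q.1 *ᵥ q.2 :=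
    contDiff_pi.mpr fun k => by simp only [mulVec, dotProduct]; fun_prop
  have hdot : ContDiff ℝ 2 fun v : n → ℝ => v ⬝ᵥ v := by simp only [dotProduct]; fun_prop
  exact ((hmulVec.comp (contDiff_fst.prodMk (contDiff_fst.comp contDiff_snd))).sub
    ((contDiff_snd.comp contDiff_snd).smul (contDiff_fst.comp contDiff_snd))).prodMk
    ((hdot.comp (contDiff_fst.comp contDiff_snd)).sub contDiff_const)

variable [DecidableEq n] {lam : n → ℝ}

theorem fderiv_eigenEquation_comp_inr_apply (i : n) (w : n → ℝ) (t : ℝ) :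
    (fderiv ℝ (eigenEquation n) (diagonal lam, (Pi.single i 1, lam i)) ∘L
        .inr ℝ (Matrix n n ℝ) ((n → ℝ) × ℝ)) (w, t) =
      (diagonal lam *ᵥ w - (t • Pi.single i 1 + lam i • w), 2 * w i) := by
  have hvec : HasDerivAt (fun s : ℝ => Pi.single i 1 + s • w) w 0 :=
    hasDerivAt_add_smul _ w 0
  have hval : HasDerivAt (fun s : ℝ => lam i + s * t) t 0 := by
    simpa using ((hasDerivAt_id (0 : ℝ)).mul_const t).const_add (lam i)
  have hline : HasLineDerivAt ℝ (eigenEquation n)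
      (diagonal lam *ᵥ w - (t • Pi.single i 1 + lam i • w), 2 * w i)
      (diagonal lam, (Pi.single i 1, lam i)) (0, (w, t)) := by
    have hcurve : (fun s : ℝ => eigenEquation n ((diagonal lam, (Pi.single i 1, lam i)) +
        s • ((0 : Matrix n n ℝ), (w, t)))) = fun s => (diagonal lam *ᵥ (Pi.single i 1 + s • w) -
          (lam i + s * t) • (Pi.single i 1 + s • w),
          (Pi.single i 1 + s • w) ⬝ᵥ (Pi.single i 1 + s • w) - 1) := by
      funext s
      simp [eigenEquation]
    rw [HasLineDerivAt, hcurve]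
    refine ((((hasDerivAt_const (0 : ℝ) (diagonal lam)).mulVec hvec).sub
      (hval.smul hvec)).prodMk ((hvec.dotProduct hvec).sub_const 1)).congr_deriv ?_
    simp only [zero_mulVec, zero_add]
    simp [two_mul, add_comm]
  exact ((contDiff_eigenEquation.differentiable (by norm_num)).differentiableAt.hasFDerivAt
    |>.hasLineDerivAt (0, (w, t))).unique hline

theorem injective_fderiv_eigenEquation_comp_inr (hlam : Function.Injective lam) (i : n) :
    Function.Injective (fderiv ℝ (eigenEquation n) (diagonal lam, (Pi.single i 1, lam i)) ∘L
        .inr ℝ (Matrix n n ℝ) ((n → ℝ) × ℝ)) := by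
  refine (injective_iff_map_eq_zero _).mpr fun ⟨w, t⟩ hwt => ?_
  rw [fderiv_eigenEquation_comp_inr_apply, Prod.mk_eq_zero] at hwt
  obtain ⟨hvec, hwi⟩ := hwt
  have hcoord (k : n) : (lam k - lam i) * w k = if k = i then t else 0 := by
    have hk := congrFun hvec k
    simp only [Pi.sub_apply, mulVec_diagonal, Pi.add_apply, Pi.smul_apply, Pi.single_apply,
      smul_eq_mul, mul_ite, mul_one, mul_zero, Pi.zero_apply] at hk
    split_ifs at hk ⊢ <;> linarith
  have hw : w = 0 := funext fun k => by
    by_cases hk : k = i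
    · subst hk
      simpa using hwi
    · simpa [hk, sub_eq_zero, hlam.ne hk] using hcoord k
  have ht : t = 0 := by simpa [hw] using (hcoord i).symm
  simp [hw, ht]

theorem exists_eigenpair_branch (hlam : Function.Injective lam) (i : n) :
    ∃ (v : Matrix n n ℝ → n → ℝ) (μ : Matrix n n ℝ → ℝ),
      ContDiffAt ℝ 2 v (diagonal lam) ∧ ContDiffAt ℝ 2 μ (diagonal lam) ∧
      v (diagonal lam) = Pi.single i 1 ∧ μ (diagonal lam) = lam i ∧
      ∀ᶠ B in 𝓝 (diagonal lam), B *ᵥ v B = μ B • v B ∧ v B ⬝ᵥ v B = 1 := by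
  have hΦ : ContDiffAt ℝ 2 (eigenEquation n) (diagonal lam, (Pi.single i 1, lam i)) :=
    contDiff_eigenEquation.contDiffAt
  have hinv := ContinuousLinearMap.isInvertible_of_injective _
    (injective_fderiv_eigenEquation_comp_inr hlam i)
  have hzero : eigenEquation n (diagonal lam, (Pi.single i 1, lam i)) = 0 := by
    simp [eigenEquation, mulVec_single, ← Pi.single_smul]
  set ψ := hΦ.implicitFunction two_ne_zero hinv
  have hψ : ContDiffAt ℝ 2 ψ (diagonal lam) := hΦ.contDiffAt_implicitFunction two_ne_zero hinv
  have hψ0 : ψ (diagonal lam) = (Pi.single i 1, lam i) :=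
    hΦ.implicitFunction_apply_self two_ne_zero hinv
  refine ⟨fun B => (ψ B).1, fun B => (ψ B).2, contDiffAt_fst.comp _ hψ,
    contDiffAt_snd.comp _ hψ, congrArg Prod.fst hψ0, congrArg Prod.snd hψ0, ?_⟩
  filter_upwards [hΦ.eventually_apply_implicitFunction two_ne_zero hinv] with B hB
  rwa [hzero, eigenEquation, Prod.mk_eq_zero, sub_eq_zero, sub_eq_zero] at hB

theorem exists_eigenvalue_branches (hlam : Function.Injective lam) :
    ∃ μ : Matrix n n ℝ → n → ℝ, ContDiffAt ℝ 2 μ (diagonal lam) ∧ μ (diagonal lam) = lam ∧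
      (∀ᶠ B in 𝓝 (diagonal lam), ∀ i, μ B i ∈ spectrum ℝ B) ∧
      ∀ η : Matrix n n ℝ, η.IsSymm →
        HasDerivAt (fun s : ℝ => μ (diagonal lam + s • η)) (fun i => η i i) 0 ∧
        HasDerivAt (deriv fun s : ℝ => μ (diagonal lam + s • η))
          (fun i => ∑ k, 2 * η i k ^ 2 / (lam i - lam k)) 0 := by
  choose v μ hv hμ hv0 hμ0 heig using fun i => exists_eigenpair_branch hlam i
  refine ⟨fun B i => μ i B, contDiffAt_pi.mpr hμ, funext hμ0, ?_, fun η hη => ?_⟩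
  · filter_upwards [eventually_all.mpr heig] with B hB i
    refine mem_spectrum_of_mulVec_eq_smul (x := v i B) (fun hzero => ?_) (hB i).1
    simpa [hzero] using (hB i).2
  have hline i :=
    hasDerivAt_eigenvalue_line_diagonal hlam hη (hv i) (hμ i) (hv0 i) (hμ0 i) (heig i)
  have hdiff : ∀ᶠ s in 𝓝 (0 : ℝ),
      ∀ i, DifferentiableAt ℝ (fun t : ℝ => μ i (diagonal lam + t • η)) s :=
    eventually_all.mpr fun i => ((hμ i).comp_add_smul η).eventually (by simp) |>.mono
      fun _ hs => hs.differentiableAt two_ne_zero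
  refine ⟨hasDerivAt_pi.mpr fun i => (hline i).1, ?_⟩
  refine (hasDerivAt_pi.mpr fun i => (hline i).2).congr_of_eventuallyEq ?_
  filter_upwards [hdiff] with s hs
  exact deriv_pi hs

end EigenvalueBranches

section Coordinates

variable {m : ℕ} {f : (Fin m → ℝ) → ℝ} {x : Fin m → ℝ}

theorem fderiv_apply_eq_sum_pd (y : Fin m → ℝ) : fderiv ℝ f x y = ∑ i, pd f x i * y i := by
  rw [(fderiv ℝ f x).apply_eq_sum_smul_single]
  simp only [pd, smul_eq_mul, mul_comm]

theorem fderiv_fderiv_apply_eq_sum_pd2 (hf : DifferentiableAt ℝ (fderiv ℝ f) x)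
    (y z : Fin m → ℝ) :
    fderiv ℝ (fderiv ℝ f) x y z = ∑ i, ∑ j, pd2 f x i j * y i * z j := by
  have hpd2 (i j : Fin m) :
      pd2 f x i j = fderiv ℝ (fderiv ℝ f) x (Pi.single i 1) (Pi.single j 1) := by
    rw [pd2, fderiv_clm_apply hf (differentiableAt_const _)]
    simp
  rw [(fderiv ℝ (fderiv ℝ f) x).apply_eq_sum_smul_single y]
  simp only [_root_.sum_apply, _root_.smul_apply, smul_eq_mul]
  refine Finset.sum_congr rfl fun i _ => ?_
  rw [ContinuousLinearMap.apply_eq_sum_smul_single _ z, Finset.mul_sum]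
  refine Finset.sum_congr rfl fun j _ => ?_
  rw [hpd2, smul_eq_mul]
  ring

end Coordinates

/-- The terms with `j = i` vanish on both sides by the convention `x / 0 = 0`. -/
theorem sum_sum_erase_sub_div_sub_mul_sq {ι : Type*} [Fintype ι] [DecidableEq ι] (a lam : ι → ℝ)
    {η : Matrix ι ι ℝ} (hη : η.IsSymm) :
    ∑ i, ∑ j ∈ Finset.univ.erase i, (a i - a j) / (lam i - lam j) * η i j ^ 2 =
      ∑ i, a i * ∑ j, 2 * η i j ^ 2 / (lam i - lam j) := by
  have hswap : ∑ i, ∑ j, a j / (lam i - lam j) * η i j ^ 2 =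
      -∑ i, ∑ j, a i / (lam i - lam j) * η i j ^ 2 := by
    rw [Finset.sum_comm, ← Finset.sum_neg_distrib]
    refine Finset.sum_congr rfl fun i _ => ?_
    rw [← Finset.sum_neg_distrib]
    refine Finset.sum_congr rfl fun j _ => ?_
    rw [hη.apply i j, ← neg_sub (lam i), div_neg, neg_mul]
  have herase (i : ι) :
      ∑ j ∈ Finset.univ.erase i, (a i - a j) / (lam i - lam j) * η i j ^ 2 =
        ∑ j, (a i - a j) / (lam i - lam j) * η i j ^ 2 :=
    Finset.sum_erase _ (by simp)
  rw [Finset.sum_congr rfl fun i _ => herase i]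
  simp only [sub_div, sub_mul, Finset.sum_sub_distrib]
  rw [hswap, sub_neg_eq_add]
  simp only [Finset.mul_sum, ← Finset.sum_add_distrib]
  refine Finset.sum_congr rfl fun i _ => Finset.sum_congr rfl fun j _ => ?_
  ring

theorem deriv_deriv_comp_eigenvalue_line {m : ℕ} {f : (Fin m → ℝ) → ℝ} {lam : Fin m → ℝ}
    {μ : Matrix (Fin m) (Fin m) ℝ → Fin m → ℝ} {η : Matrix (Fin m) (Fin m) ℝ} (hη : η.IsSymm)
    (hf : ContDiffAt ℝ 2 f lam) (hμ : ContDiffAt ℝ 2 μ (diagonal lam))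
    (hμ0 : μ (diagonal lam) = lam)
    (hd : HasDerivAt (fun s : ℝ => μ (diagonal lam + s • η)) (fun i => η i i) 0)
    (hq : HasDerivAt (deriv fun s : ℝ => μ (diagonal lam + s • η))
      (fun i => ∑ k, 2 * η i k ^ 2 / (lam i - lam k)) 0) :
    deriv (deriv fun s : ℝ => f (μ (diagonal lam + s • η))) 0 =
      (∑ i, ∑ j, pd2 f lam i j * η i i * η j j) +
        ∑ i, ∑ j ∈ Finset.univ.erase i,
          ((pd f lam i - pd f lam j) / (lam i - lam j)) * η i j ^ 2 := by
  have hdf : DifferentiableAt ℝ (fderiv ℝ f) lam :=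
    (hf.fderiv_right (m := 1) le_rfl).differentiableAt one_ne_zero
  rw [ContDiffAt.deriv_deriv_comp (by simpa [hμ0] using hf) (hμ.comp_add_smul η), hd.deriv,
    hq.deriv]
  simp only [zero_smul, add_zero, hμ0]
  rw [fderiv_fderiv_apply_eq_sum_pd2 hdf, fderiv_apply_eq_sum_pd,
    sum_sum_erase_sub_div_sub_mul_sq _ _ hη]

theorem eventually_comp_eigVec_eq {m : ℕ} {Ω : Set (Fin m → ℝ)} (hΩ : IsOpen Ω)
    {f : (Fin m → ℝ) → ℝ} (hfsymm : ∀ π : Equiv.Perm (Fin m), ∀ x ∈ Ω, f (x ∘ π) = f x)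
    {μ : Matrix (Fin m) (Fin m) ℝ → Fin m → ℝ} {A : SymMat m} (hμ : ContinuousAt μ A)
    (hμA : μ A ∈ Ω) (hinj : Function.Injective (μ A))
    (hspec : ∀ᶠ B in 𝓝 (A : Matrix (Fin m) (Fin m) ℝ), ∀ i, μ B i ∈ spectrum ℝ B) :
    (fun B => f (eigVec B)) =ᶠ[𝓝 A] fun B => f (μ B) := by
  have hval : Tendsto (fun B : SymMat m => (B : Matrix (Fin m) (Fin m) ℝ)) (𝓝 A) (𝓝 A) :=
    continuous_subtype_val.continuousAt
  filter_upwards [hval.eventually hspec, hval.eventually (hμ.eventually_injective hinj),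
    hval.eventually (hμ.preimage_mem_nhds (hΩ.mem_nhds hμA))] with B hBspec hBinj hBΩ
  obtain ⟨σ, hσ⟩ := (IsSymm.isHermitianR B.2).exists_perm_eigenvalues_eq_comp hBinj hBspec
  rw [eigVec, hσ]
  exact hfsymm σ _ hBΩ

theorem stmt_4_general (m : ℕ)
    (Ω : Set (Fin m → ℝ)) (hΩopen : IsOpen Ω)
    (f : (Fin m → ℝ) → ℝ)
    (hf : ContDiffOn ℝ 2 f Ω)
    (hfsymm : ∀ π : Equiv.Perm (Fin m), ∀ x ∈ Ω, f (x ∘ π) = f x)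
    (lam : Fin m → ℝ) (hlam : lam ∈ Ω) (hdist : Function.Injective lam)
    (A : SymMat m) (hAdiag : (A : Matrix (Fin m) (Fin m) ℝ) = Matrix.diagonal lam) :
    (∀ᶠ B in nhds A, DifferentiableAt ℝ (fun B : SymMat m => f (eigVec B)) B) ∧
    DifferentiableAt ℝ (fderiv ℝ (fun B : SymMat m => f (eigVec B))) A ∧
    ∀ η : SymMat m,
      fderiv ℝ (fderiv ℝ (fun B : SymMat m => f (eigVec B))) A η η
        = (∑ i, ∑ j, pd2 f lam i j * (η : Matrix (Fin m) (Fin m) ℝ) i i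
              * (η : Matrix (Fin m) (Fin m) ℝ) j j)
          + ∑ i, ∑ j ∈ Finset.univ.erase i,
              ((pd f lam i - pd f lam j) / (lam i - lam j))
                * ((η : Matrix (Fin m) (Fin m) ℝ) i j) ^ 2 := by
  obtain ⟨μ, hμ, hμ0, hspec, hline⟩ := exists_eigenvalue_branches hdist
  have hf_lam : ContDiffAt ℝ 2 f lam := hf.contDiffAt (hΩopen.mem_nhds hlam)
  have hG : ContDiffAt ℝ 2 (fun B : SymMat m => f (μ B)) A := by
    refine ContDiffAt.comp (g := fun B => f (μ B)) A ?_ (SymMat m).subtypeL.contDiff.contDiffAt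
    rw [hAdiag]
    exact (by rwa [hμ0] : ContDiffAt ℝ 2 f (μ (diagonal lam))).comp _ hμ
  have hFG := eventually_comp_eigVec_eq hΩopen hfsymm (hAdiag ▸ hμ.continuousAt)
    (by rwa [hAdiag, hμ0]) (by rwa [hAdiag, hμ0]) (hAdiag ▸ hspec)
  refine ⟨?_, hFG.fderiv.differentiableAt_iff.mpr
    ((hG.fderiv_right (m := 1) le_rfl).differentiableAt one_ne_zero), fun η => ?_⟩
  · filter_upwards [hG.eventually (by simp), hFG.eventuallyEq_nhds] with B hB hFGB
    exact hFGB.differentiableAt_iff.mpr (hB.differentiableAt two_ne_zero)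
  rw [hFG.fderiv.fderiv_eq]
  refine (hG.fderiv_fderiv_apply_eq_deriv_deriv η).trans ?_
  simp only [Submodule.coe_add, Submodule.coe_smul, hAdiag]
  exact deriv_deriv_comp_eigenvalue_line η.2 hf_lam hμ hμ0 (hline η η.2).1 (hline η η.2).2

/-- Lemma of Andrews–Gerhardt: if `f` is `C²` and symmetric on an open
permutation-invariant `Ω ⊆ ℝ^m` and `λ ∈ Ω` has pairwise distinct entries, then
`F(B) = f(λ(B))` on `Sym_m` is twice differentiable at `A = diag(λ)` with
`D²F(A)[η,η] = ∑_{i,j} ∂²f/∂λᵢ∂λⱼ(λ) ηᵢᵢ ηⱼⱼ + ∑_{i≠j} ((fᵢ(λ)-fⱼ(λ))/(λᵢ-λⱼ)) ηᵢⱼ²`. -/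
theorem stmt_4 (m : ℕ) (hm : 2 ≤ m)
    (Ω : Set (Fin m → ℝ)) (hΩopen : IsOpen Ω)
    (hΩperm : ∀ π : Equiv.Perm (Fin m), ∀ x ∈ Ω, x ∘ π ∈ Ω)
    (f : (Fin m → ℝ) → ℝ)
    (hf : ContDiffOn ℝ 2 f Ω)
    (hfsymm : ∀ π : Equiv.Perm (Fin m), ∀ x ∈ Ω, f (x ∘ π) = f x)
    (lam : Fin m → ℝ) (hlam : lam ∈ Ω) (hdist : Function.Injective lam)
    (A : SymMat m) (hAdiag : (A : Matrix (Fin m) (Fin m) ℝ) = Matrix.diagonal lam) :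
    (∀ᶠ B in nhds A, DifferentiableAt ℝ (fun B : SymMat m => f (eigVec B)) B) ∧
    DifferentiableAt ℝ (fderiv ℝ (fun B : SymMat m => f (eigVec B))) A ∧
    ∀ η : SymMat m,
      fderiv ℝ (fderiv ℝ (fun B : SymMat m => f (eigVec B))) A η η
        = (∑ i, ∑ j, pd2 f lam i j * (η : Matrix (Fin m) (Fin m) ℝ) i i
              * (η : Matrix (Fin m) (Fin m) ℝ) j j)
          + ∑ i, ∑ j ∈ Finset.univ.erase i,
              ((pd f lam i - pd f lam j) / (lam i - lam j))
                * ((η : Matrix (Fin m) (Fin m) ℝ) i j) ^ 2 :=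
  stmt_4_general m Ω hΩopen f hf hfsymm lam hlam hdist A hAdiag
end

section
/- Let β ∈ (0,1], let λ ∈ Γ, and let r ∈ {1,…,m} be an index with λ_r < 0. If f_i(λ) ≥ β ∑_{j=1}^m f_j(λ) for every i = 1,…,m, then f_r(λ)λ_r² ≤ ((m−1)/β) ∑_{i ≠ r} f_i(λ)λ_i². -/
open Filter Topology

/-!
Averaging `λ` over the cyclic shifts of the coordinates puts `(∑ λᵢ / m) • 1` in `Γ`. If
`∑ λᵢ ≤ 0`, then `0` is a convex combination of this point and `1 ∈ Γₘ`, and an open cone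
containing `0` is all of `ℝ^m`; hence `∑ λᵢ > 0`. With `λ_r < 0` this gives
`|λ_r| < ∑_{i≠r} λᵢ`, and Cauchy–Schwarz gives `λ_r² ≤ (m-1) ∑_{i≠r} λᵢ²`. Finally
`β f_r ≤ β ∑ⱼ fⱼ ≤ fᵢ` for every `i`, so `f_r λᵢ² ≤ fᵢ λᵢ² / β`.
-/

lemma IsOpen.eq_univ_of_zero_mem_of_smul_mem {E : Type*} [AddCommGroup E] [Module ℝ E]
    [TopologicalSpace E] [ContinuousSMul ℝ E] {Γ : Set E} (hopen : IsOpen Γ)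
    (hcone : ∀ t : ℝ, 0 < t → ∀ x ∈ Γ, t • x ∈ Γ) (h0 : (0 : E) ∈ Γ) :
    Γ = Set.univ := by
  refine Set.eq_univ_of_forall fun x => ?_
  have hlim : Tendsto (fun t : ℝ => t • x) (𝓝[>] 0) (𝓝 0) := by
    simpa using (tendsto_id.smul_const x).mono_left (nhdsWithin_le_nhds (a := (0 : ℝ)))
  obtain ⟨t, htx, ht⟩ :=
    ((hlim.eventually (hopen.mem_nhds h0)).and self_mem_nhdsWithin).exists
  simpa [smul_smul, inv_mul_cancel₀ (ne_of_gt ht)] using hcone t⁻¹ (inv_pos.2 ht) _ htx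

lemma Convex.const_mean_mem_of_perm_mem {m : ℕ} [NeZero m] {Γ : Set (Fin m → ℝ)}
    (hconv : Convex ℝ Γ)
    (hperm : ∀ π : Equiv.Perm (Fin m), ∀ x ∈ Γ, x ∘ π ∈ Γ) {lam : Fin m → ℝ} (hlam : lam ∈ Γ) :
    (fun _ => (∑ i, lam i) / m) ∈ Γ := by
  have hm : (m : ℝ) ≠ 0 := NeZero.ne _
  convert hconv.sum_mem (t := Finset.univ) (w := fun _ => (m : ℝ)⁻¹)
    (z := fun k => lam ∘ Equiv.addRight k) (fun _ _ => by positivity)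
    (by simp [Finset.card_univ, hm]) (fun k _ => hperm _ lam hlam) using 1
  funext i
  simp only [Finset.sum_apply, Pi.smul_apply, smul_eq_mul, Function.comp_apply,
    Equiv.coe_addRight, ← Finset.mul_sum]
  rw [show ∑ k, lam (i + k) = ∑ k, lam k from Equiv.sum_comp (Equiv.addLeft i) lam,
    div_eq_inv_mul]

lemma sum_pos_of_mem_cone {m : ℕ} [NeZero m] {Γ : Set (Fin m → ℝ)} (hopen : IsOpen Γ)
    (hconv : Convex ℝ Γ) (hproper : Γ ≠ Set.univ) (hcone : ∀ t : ℝ, 0 < t → ∀ x ∈ Γ, t • x ∈ Γ)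
    (hperm : ∀ π : Equiv.Perm (Fin m), ∀ x ∈ Γ, x ∘ π ∈ Γ)
    (hpos : {x : Fin m → ℝ | ∀ i, 0 < x i} ⊆ Γ) {lam : Fin m → ℝ} (hlam : lam ∈ Γ) :
    0 < ∑ i, lam i := by
  by_contra! hsum
  set s := (∑ i, lam i) / m
  have hs : s ≤ 0 := div_nonpos_of_nonpos_of_nonneg hsum (Nat.cast_nonneg m)
  have hone : (fun _ => (1 : ℝ)) ∈ Γ := hpos fun _ => one_pos
  have h1s : 0 < 1 - s := by linarith
  have h0 : (0 : Fin m → ℝ) ∈ Γ := by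
    convert hconv hone (hconv.const_mean_mem_of_perm_mem hperm hlam)
      (a := -s / (1 - s)) (b := 1 / (1 - s))
      (div_nonneg (neg_nonneg.2 hs) h1s.le) (by positivity) (by field_simp; ring) using 1
    funext i
    simp only [Pi.zero_apply, Pi.add_apply, Pi.smul_apply, smul_eq_mul]
    field_simp
    ring
  exact hproper (hopen.eq_univ_of_zero_mem_of_smul_mem hcone h0)

section Inequality

open Finset

variable {ι : Type*} [Fintype ι] [DecidableEq ι] {x : ι → ℝ} {r : ι}

lemma sq_le_card_sub_one_mul_sum_erase_sq (hr : x r < 0) (hsum : 0 < ∑ i, x i) :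
    x r ^ 2 ≤ ((Fintype.card ι : ℝ) - 1) * ∑ i ∈ univ.erase r, x i ^ 2 := by
  have hsplit : ∑ i ∈ univ.erase r, x i + x r = ∑ i, x i := sum_erase_add _ _ (mem_univ r)
  have hcard : (#(univ.erase r) : ℝ) = (Fintype.card ι : ℝ) - 1 := by
    rw [card_erase_of_mem (mem_univ r), card_univ,
      Nat.cast_sub (Fintype.card_pos_iff.2 ⟨r⟩), Nat.cast_one]
  calc x r ^ 2 ≤ (∑ i ∈ univ.erase r, x i) ^ 2 := sq_le_sq' (by linarith) (by linarith)
    _ ≤ #(univ.erase r) * ∑ i ∈ univ.erase r, x i ^ 2 := sq_sum_le_card_mul_sum_sq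
    _ = _ := by rw [hcard]

lemma mul_sq_le_of_mul_sum_le {F : ι → ℝ} {β : ℝ} (hF : ∀ i, 0 ≤ F i) (hβ : 0 < β)
    (hFβ : ∀ i, β * ∑ j, F j ≤ F i) (hr : x r < 0) (hsum : 0 < ∑ i, x i) :
    F r * x r ^ 2 ≤ (((Fintype.card ι : ℝ) - 1) / β) * ∑ i ∈ univ.erase r, F i * x i ^ 2 := by
  have hcard : (1 : ℝ) ≤ Fintype.card ι := by exact_mod_cast Fintype.card_pos_iff.2 ⟨r⟩
  have hFr : ∀ i, β * F r ≤ F i := fun i =>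
    (mul_le_mul_of_nonneg_left (single_le_sum (fun j _ => hF j) (mem_univ r)) hβ.le).trans
      (hFβ i)
  calc F r * x r ^ 2 ≤ F r * (((Fintype.card ι : ℝ) - 1) * ∑ i ∈ univ.erase r, x i ^ 2) :=
        mul_le_mul_of_nonneg_left (sq_le_card_sub_one_mul_sum_erase_sq hr hsum) (hF r)
    _ = (((Fintype.card ι : ℝ) - 1) / β) * ∑ i ∈ univ.erase r, β * F r * x i ^ 2 := by
        rw [← mul_sum]
        field_simp
    _ ≤ (((Fintype.card ι : ℝ) - 1) / β) * ∑ i ∈ univ.erase r, F i * x i ^ 2 := by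
        gcongr with i
        exact hFr i

end Inequality

theorem stmt_8_general (m : ℕ)
    (Γ : Set (Fin m → ℝ)) (f : (Fin m → ℝ) → ℝ)
    (hΓopen : IsOpen Γ) (hΓconv : Convex ℝ Γ)
    (hΓproper : Γ ≠ Set.univ)
    (hΓcone : ∀ t : ℝ, 0 < t → ∀ x ∈ Γ, t • x ∈ Γ)
    (hΓperm : ∀ π : Equiv.Perm (Fin m), ∀ x ∈ Γ, x ∘ π ∈ Γ)
    (hΓpos : {x : Fin m → ℝ | ∀ i, 0 < x i} ⊆ Γ)
    (hf1 : ∀ x ∈ Γ, ∀ i, 0 < pd f x i)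
    (β : ℝ) (hβ : 0 < β)
    (lam : Fin m → ℝ) (hlam : lam ∈ Γ)
    (r : Fin m) (hr : lam r < 0)
    (hf : ∀ i, β * ∑ j, pd f lam j ≤ pd f lam i) :
    pd f lam r * (lam r) ^ 2
      ≤ (((m : ℝ) - 1) / β) * ∑ i ∈ Finset.univ.erase r, pd f lam i * (lam i) ^ 2 := by
  have : NeZero m := ⟨r.pos.ne'⟩
  have hsum : 0 < ∑ i, lam i :=
    sum_pos_of_mem_cone hΓopen hΓconv hΓproper hΓcone hΓperm hΓpos hlam
  simpa using mul_sq_le_of_mul_sum_le (fun i => (hf1 lam hlam i).le) hβ hf hr hsum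

/-- inequality (6.10): if `β ∈ (0,1]`, `λ ∈ Γ`, `λ_r < 0` and
`fᵢ(λ) ≥ β ∑ⱼ fⱼ(λ)` for every `i`, then
`f_r λ_r² ≤ ((m-1)/β) ∑_{i≠r} fᵢλᵢ²`. -/
theorem stmt_8 (m : ℕ) (hm : 2 ≤ m)
    (Γ : Set (Fin m → ℝ)) (f : (Fin m → ℝ) → ℝ)
    (hΓopen : IsOpen Γ) (hΓconv : Convex ℝ Γ) (hΓne : Γ.Nonempty)
    (hΓproper : Γ ≠ Set.univ)
    (hΓcone : ∀ t : ℝ, 0 < t → ∀ x ∈ Γ, t • x ∈ Γ)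
    (hΓperm : ∀ π : Equiv.Perm (Fin m), ∀ x ∈ Γ, x ∘ π ∈ Γ)
    (hΓpos : {x : Fin m → ℝ | ∀ i, 0 < x i} ⊆ Γ)
    (hfsmooth : ContDiffOn ℝ (⊤ : ℕ∞) f Γ)
    (hfsymm : ∀ π : Equiv.Perm (Fin m), ∀ x ∈ Γ, f (x ∘ π) = f x)
    (hf1 : ∀ x ∈ Γ, ∀ i, 0 < pd f x i)
    (hf2 : ConcaveOn ℝ Γ f)
    (β : ℝ) (hβ : 0 < β) (hβ' : β ≤ 1)
    (lam : Fin m → ℝ) (hlam : lam ∈ Γ)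
    (r : Fin m) (hr : lam r < 0)
    (hf : ∀ i, β * ∑ j, pd f lam j ≤ pd f lam i) :
    pd f lam r * (lam r) ^ 2
      ≤ (((m : ℝ) - 1) / β) * ∑ i ∈ Finset.univ.erase r, pd f lam i * (lam i) ^ 2 :=
  stmt_8_general m Γ f hΓopen hΓconv hΓproper hΓcone hΓperm hΓpos hf1 β hβ lam hlam r hr hf
end

section
/- Assume in addition that there is a constant K₀ ≥ 0 such that ∑_{i=1}^m f_i(λ)λ_i ≥ −K₀ ∑_{i=1}^m f_i(λ) for every λ ∈ Γ. Let K ⊂ Γ be compact. Then there exist constants b₀ > 0 and s₀ > 0, depending only on m, f, K₀ and K, such that for every λ ∈ Γ with λ_m ≥ s₀ and every μ ∈ K with f(λ) ≤ f(μ), one has λ_m · ∑_{i=1}^m f_i(λ) ≥ b₀. -/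
open Filter Topology

/-- A continuous linear functional on `ℝ^m` applied to `v` equals the sum of its values on
the canonical basis weighted by the coordinates of `v`. -/
lemma clm_apply_eq_sum {m : ℕ} (L : (Fin m → ℝ) →L[ℝ] ℝ) (v : Fin m → ℝ) :
    L v = ∑ i, v i * L (Pi.single i 1) := by
  have hv : v = ∑ i, v i • (Pi.single i 1 : Fin m → ℝ) := by
    ext j
    simp [Pi.single_apply]
  conv_lhs => rw [hv]
  simp [smul_eq_mul]

/-- inequality (dj-9): assuming moreover `∑ fᵢ(λ)λᵢ ≥ -K₀ ∑ fᵢ(λ)` on `Γ`,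
for compact `K ⊂ Γ` there are `b₀, s₀ > 0` such that for every `λ ∈ Γ` with `λ_m ≥ s₀`
and every `μ ∈ K` with `f(λ) ≤ f(μ)`, one has `λ_m ∑ᵢ fᵢ(λ) ≥ b₀`. -/
theorem stmt_10 (m : ℕ) (hm : 2 ≤ m)
    (Γ : Set (Fin m → ℝ)) (f : (Fin m → ℝ) → ℝ)
    (hΓopen : IsOpen Γ) (hΓconv : Convex ℝ Γ) (hΓne : Γ.Nonempty)
    (hΓproper : Γ ≠ Set.univ)
    (hΓcone : ∀ t : ℝ, 0 < t → ∀ x ∈ Γ, t • x ∈ Γ)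
    (hΓperm : ∀ π : Equiv.Perm (Fin m), ∀ x ∈ Γ, x ∘ π ∈ Γ)
    (hΓpos : {x : Fin m → ℝ | ∀ i, 0 < x i} ⊆ Γ)
    (hfsmooth : ContDiffOn ℝ (⊤ : ℕ∞) f Γ)
    (hfsymm : ∀ π : Equiv.Perm (Fin m), ∀ x ∈ Γ, f (x ∘ π) = f x)
    (hf1 : ∀ x ∈ Γ, ∀ i, 0 < pd f x i)
    (hf2 : ConcaveOn ℝ Γ f)
    (K₀ : ℝ) (hK₀ : 0 ≤ K₀)
    (hc290 : ∀ x ∈ Γ, ∑ i, pd f x i * x i ≥ -K₀ * ∑ i, pd f x i)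
    (K : Set (Fin m → ℝ)) (hK : IsCompact K) (hKΓ : K ⊆ Γ) :
    ∃ b₀ : ℝ, 0 < b₀ ∧ ∃ s₀ : ℝ, 0 < s₀ ∧
      ∀ lam ∈ Γ, s₀ ≤ lam (⟨m - 1, by omega⟩ : Fin m) → ∀ μ ∈ K, f lam ≤ f μ →
      lam (⟨m - 1, by omega⟩ : Fin m) * ∑ i, pd f lam i ≥ b₀ := by
  classical
  rcases K.eq_empty_or_nonempty with hKe | hKne
  · exact ⟨1, one_pos, 1, one_pos, fun lam _ _ μ hμ _ => by simp [hKe] at hμ⟩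
  haveI : Nonempty (Fin m) := ⟨⟨0, by omega⟩⟩
  set e : Fin m → ℝ := fun _ => (1 : ℝ) with he
  -- Γ is closed under addition
  have hadd : ∀ x ∈ Γ, ∀ y ∈ Γ, x + y ∈ Γ := by
    intro x hx y hy
    have hmid : (1/2 : ℝ) • x + (1/2 : ℝ) • y ∈ Γ :=
      hΓconv hx hy (by norm_num) (by norm_num) (by norm_num)
    have h2 := hΓcone 2 two_pos _ hmid
    have heq : (2 : ℝ) • ((1/2 : ℝ) • x + (1/2 : ℝ) • y) = x + y := by
      module
    rwa [heq] at h2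
  have he_mem : ∀ t : ℝ, 0 < t → (t • e) ∈ Γ := by
    intro t ht
    apply hΓpos
    intro i
    simpa [he] using ht
  have hdiffAt : ∀ p ∈ Γ, DifferentiableAt ℝ f p := fun p hp =>
    (hfsmooth.differentiableOn (by norm_num)).differentiableAt (hΓopen.mem_nhds hp)
  -- derivative along a line
  have hfd : ∀ (x v : Fin m → ℝ) (t : ℝ), x + t • v ∈ Γ →
      HasDerivAt (fun s : ℝ => f (x + s • v)) (∑ i, v i * pd f (x + t • v) i) t := by
    intro x v t hmem
    have hp := hdiffAt _ hmem
    have h1 : HasDerivAt (fun s : ℝ => x + s • v) v t := by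
      simpa using ((hasDerivAt_id t).smul_const v).const_add x
    have h2 := hp.hasFDerivAt.comp_hasDerivAt t h1
    have h3 : (fderiv ℝ f (x + t • v)) v = ∑ i, v i * pd f (x + t • v) i := by
      rw [clm_apply_eq_sum]
      rfl
    rw [← h3]
    exact h2
  have hcontΓ : ContinuousOn f Γ := hfsmooth.continuousOn
  -- membership of x + t • e for t ≥ 0
  have hmem1 : ∀ x ∈ Γ, ∀ t : ℝ, 0 ≤ t → x + t • e ∈ Γ := by
    intro x hx t ht
    rcases eq_or_lt_of_le ht with h | h
    · simpa [← h] using hx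
    · exact hadd x hx _ (he_mem t h)
  have hmem1' : ∀ x ∈ Γ, x + e ∈ Γ := by
    intro x hx
    simpa using hmem1 x hx 1 zero_le_one
  -- f(μ + e) > f(μ) for μ ∈ Γ
  have hpos : ∀ μ ∈ Γ, f μ < f (μ + e) := by
    intro μ hμ
    have hsm : StrictMonoOn (fun t : ℝ => f (μ + t • e)) (Set.Icc 0 1) := by
      apply strictMonoOn_of_hasDerivWithinAt_pos (convex_Icc 0 1)
        (f' := fun t => ∑ i, e i * pd f (μ + t • e) i)
      · apply ContinuousOn.comp hcontΓ
        · exact (continuous_const.add (continuous_id.smul continuous_const)).continuousOn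
        · intro t ht
          exact hmem1 μ hμ t ht.1
      · intro t ht
        rw [interior_Icc] at ht
        exact (hfd μ e t (hmem1 μ hμ t ht.1.le)).hasDerivWithinAt
      · intro t ht
        rw [interior_Icc] at ht
        apply Finset.sum_pos
        · intro i _
          have := hf1 _ (hmem1 μ hμ t ht.1.le) i
          simpa [he] using this
        · exact Finset.univ_nonempty
    have := hsm (Set.mem_Icc.2 ⟨le_refl 0, zero_le_one⟩) (Set.mem_Icc.2 ⟨zero_le_one, le_refl 1⟩)
      zero_lt_one
    simpa using this
  -- bound on K
  obtain ⟨μC, hμC, hCmax⟩ := hK.exists_isMaxOn hKne continuous_norm.continuousOn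
  set C : ℝ := ‖μC‖ with hCdef
  have hC0 : 0 ≤ C := norm_nonneg _
  have hCb : ∀ μ ∈ K, ∀ i, μ i ≤ C := by
    intro μ hμ i
    calc μ i ≤ |μ i| := le_abs_self _
    _ ≤ ‖μ‖ := by simpa [Real.norm_eq_abs] using norm_le_pi_norm μ i
    _ ≤ C := isMaxOn_iff.mp hCmax μ hμ
  -- minimum of f(μ+e) - f(μ) on K
  have hcont : ContinuousOn (fun μ => f (μ + e) - f μ) K := by
    apply ContinuousOn.sub
    · apply ContinuousOn.comp hcontΓ
      · exact (continuous_id.add continuous_const).continuousOn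
      · intro μ hμ
        exact hmem1' μ (hKΓ hμ)
    · exact hcontΓ.mono hKΓ
  obtain ⟨μ₁, hμ₁, hmin⟩ := hK.exists_isMinOn hKne hcont
  set c₁ : ℝ := f (μ₁ + e) - f μ₁ with hc₁def
  have hc₁ : 0 < c₁ := sub_pos.2 (hpos μ₁ (hKΓ hμ₁))
  set D : ℝ := C + 1 + K₀ with hDdef
  have hDpos : 0 < D := by positivity
  refine ⟨c₁ / D, div_pos hc₁ hDpos, 1, one_pos, ?_⟩
  intro lam hlam hs μ hμ hfle
  set i₀ : Fin m := (⟨m - 1, by omega⟩ : Fin m) with hi₀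
  have hν : μ + e ∈ Γ := hmem1' μ (hKΓ hμ)
  set v : Fin m → ℝ := (μ + e) - lam with hv
  -- concavity of t ↦ f (lam + t • v) on [0,1]
  have hgc : ConcaveOn ℝ (Set.Icc (0:ℝ) 1) (fun t : ℝ => f (lam + t • v)) := by
    have hA := hf2.comp_affineMap (AffineMap.lineMap lam (μ + e) : ℝ →ᵃ[ℝ] (Fin m → ℝ))
    have heq : (f ∘ (AffineMap.lineMap lam (μ + e) : ℝ →ᵃ[ℝ] (Fin m → ℝ)))
        = fun t : ℝ => f (lam + t • v) := by
      funext t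
      simp only [Function.comp_apply, AffineMap.lineMap_apply_module, hv]
      congr 1
      module
    rw [heq] at hA
    apply hA.subset ?_ (convex_Icc 0 1)
    intro t ht
    simp only [Set.mem_preimage, AffineMap.lineMap_apply_module]
    have hmem := hΓconv hlam hν (by linarith [ht.2] : (0:ℝ) ≤ 1 - t) ht.1 (by ring)
    convert hmem using 2
  have hg0 : HasDerivAt (fun t : ℝ => f (lam + t • v)) (∑ i, v i * pd f lam i) 0 := by
    have := hfd lam v 0 (by simpa using hlam)
    simpa using this
  have hslope := hgc.slope_le_of_hasDerivAt (Set.mem_Icc.2 ⟨le_refl 0, zero_le_one⟩)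
      (Set.mem_Icc.2 ⟨zero_le_one, le_refl 1⟩) zero_lt_one hg0
  have hslope' : f (μ + e) - f lam ≤ ∑ i, v i * pd f lam i := by
    have heq : slope (fun t : ℝ => f (lam + t • v)) 0 1 = f (μ + e) - f lam := by
      rw [slope_def_field]
      simp [hv]
    rwa [heq] at hslope
  have hsum_pos : 0 < ∑ i, pd f lam i :=
    Finset.sum_pos (fun i _ => hf1 lam hlam i) Finset.univ_nonempty
  have h1 : c₁ ≤ f (μ + e) - f lam := by
    have hm1 : c₁ ≤ f (μ + e) - f μ := isMinOn_iff.mp hmin μ hμ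
    linarith
  have h2 : ∑ i, v i * pd f lam i ≤ D * ∑ i, pd f lam i := by
    have hexp : ∑ i, v i * pd f lam i
        = ∑ i, (μ i + 1) * pd f lam i - ∑ i, pd f lam i * lam i := by
      rw [← Finset.sum_sub_distrib]
      apply Finset.sum_congr rfl
      intro i _
      simp [hv, he]
      ring
    rw [hexp]
    have hA : ∑ i, (μ i + 1) * pd f lam i ≤ (C + 1) * ∑ i, pd f lam i := by
      rw [Finset.mul_sum]
      apply Finset.sum_le_sum
      intro i _
      exact mul_le_mul_of_nonneg_right (by linarith [hCb μ hμ i]) (hf1 lam hlam i).le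
    have hB := hc290 lam hlam
    have hDT : D * ∑ i, pd f lam i = (C + 1) * ∑ i, pd f lam i + K₀ * ∑ i, pd f lam i := by
      rw [hDdef]; ring
    linarith
  have h3 : c₁ ≤ D * ∑ i, pd f lam i := h1.trans (hslope'.trans h2)
  have h4 : c₁ / D ≤ ∑ i, pd f lam i := by
    rw [div_le_iff₀ hDpos]
    linarith
  have h5 : (1:ℝ) * ∑ i, pd f lam i ≤ lam i₀ * ∑ i, pd f lam i :=
    mul_le_mul_of_nonneg_right hs hsum_pos.le
  rw [ge_iff_le]
  calc c₁ / D ≤ ∑ i, pd f lam i := h4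
  _ = 1 * ∑ i, pd f lam i := (one_mul _).symm
  _ ≤ lam i₀ * ∑ i, pd f lam i := h5
end

section
/- Every λ ∈ Γ satisfies ∑_{i=1}^m λ_i > 0. -/
/-- Every `λ ∈ Γ` satisfies `∑ᵢ λᵢ > 0`, where `Γ ⊆ ℝ^m` (`m ≥ 2`) is a
nonempty open convex symmetric cone with vertex at the origin, `Γ_m ⊆ Γ` and `Γ ≠ ℝ^m`. -/
theorem stmt_12 (m : ℕ) (hm : 2 ≤ m)
    (Γ : Set (Fin m → ℝ))
    (hΓopen : IsOpen Γ) (hΓconv : Convex ℝ Γ) (hΓne : Γ.Nonempty)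
    (hΓproper : Γ ≠ Set.univ)
    (hΓcone : ∀ t : ℝ, 0 < t → ∀ x ∈ Γ, t • x ∈ Γ)
    (hΓperm : ∀ π : Equiv.Perm (Fin m), ∀ x ∈ Γ, x ∘ π ∈ Γ)
    (hΓpos : {x : Fin m → ℝ | ∀ i, 0 < x i} ⊆ Γ) :
    ∀ lam ∈ Γ, 0 < ∑ i, lam i := by
  have hmpos : 0 < m := by omega
  haveI : NeZero m := ⟨by omega⟩
  intro lam hlam
  by_contra hs
  push_neg at hs
  apply hΓproper
  -- Γ is closed under addition
  have hadd : ∀ x ∈ Γ, ∀ y ∈ Γ, x + y ∈ Γ := by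
    intro x hx y hy
    have h := hΓconv hx hy (by norm_num : (0:ℝ) ≤ 1/2) (by norm_num : (0:ℝ) ≤ 1/2)
      (by norm_num)
    have h2 := hΓcone 2 (by norm_num) _ h
    convert h2 using 1
    funext i
    simp
    ring
  set s := ∑ i, lam i with hsdef
  -- constant vector with value s is in Γ
  have hconst : (fun _ : Fin m => s) ∈ Γ := by
    have hne : (Finset.univ : Finset (Fin m)).Nonempty := Finset.univ_nonempty
    have hsum : (∑ k : Fin m, lam ∘ (Equiv.addLeft k)) ∈ Γ :=
      Finset.sum_induction_nonempty _ (· ∈ Γ)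
        (fun a b ha hb => hadd a ha b hb) hne
        (fun k _ => hΓperm (Equiv.addLeft k) lam hlam)
    have heq : (∑ k : Fin m, lam ∘ (Equiv.addLeft k)) = fun _ : Fin m => s := by
      funext i
      rw [Finset.sum_apply]
      exact Fintype.sum_equiv (Equiv.addRight i) _ lam (fun k => rfl)
    rwa [heq] at hsum
  -- get a strictly negative constant vector in Γ, using openness
  have hf : Continuous (fun t : ℝ => (fun _ : Fin m => s - t)) := by
    apply continuous_pi
    intro i
    exact continuous_const.sub continuous_id
  have h0 : (0:ℝ) ∈ (fun t : ℝ => (fun _ : Fin m => s - t)) ⁻¹' Γ := by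
    simpa using hconst
  obtain ⟨ε, hε, hball⟩ := Metric.isOpen_iff.mp (hΓopen.preimage hf) 0 h0
  have hz : (fun _ : Fin m => s - ε/2) ∈ Γ := by
    apply hball
    simp only [Metric.mem_ball, Real.dist_eq, sub_zero]
    rw [abs_of_pos (by linarith)]
    linarith
  set c := s - ε/2 with hc
  have hcneg : c < 0 := by simp [hc]; linarith
  -- show Γ = univ
  apply Set.eq_univ_of_forall
  intro y
  have hne : (Finset.univ : Finset (Fin m)).Nonempty := Finset.univ_nonempty
  set B := Finset.univ.inf' hne y with hB
  set t := (|B| + 1) / (-c) with ht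
  have htpos : 0 < t := by
    apply div_pos (by positivity) (by linarith)
  have htc : t * c = -(|B| + 1) := by
    have hcne : c ≠ 0 := ne_of_lt hcneg
    rw [ht, div_mul_eq_mul_div, mul_div_assoc, div_neg, div_self hcne, mul_neg_one]
  have hw : (fun i => y i - t * c) ∈ Γ := by
    apply hΓpos
    intro i
    simp only [Set.mem_setOf_eq, htc]
    have hBy : B ≤ y i := Finset.inf'_le _ (Finset.mem_univ i)
    have : -|B| ≤ B := neg_abs_le B
    simp only [sub_neg_eq_add]
    linarith
  have hzt : t • (fun _ : Fin m => c) ∈ Γ := hΓcone t htpos _ hz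
  have := hadd _ hzt _ hw
  convert this using 1
  funext i
  simp
end

section
/- Let Γ ⊆ ℝ^m be a convex set invariant under all permutations of the coordinates, and let f : Γ → ℝ be a symmetric concave function (invariant under permutations of the coordinates). Then the set S := {A ∈ Sym_m : λ(A) ∈ Γ} is convex, and the function F : S → ℝ defined by F(A) := f(λ(A)) is concave on S. -/
/-!
For an orthogonal `Q`, write `A = V diag(λ(A)) Vᵀ` and `R = Qᵀ V`. Then the diagonal of `Qᵀ A Q`
is `P λ(A)` with `P = (R i j ^ 2)` doubly stochastic, so by Birkhoff's theorem it lies in the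
convex hull of the permutations of `λ(A)`. Hence it lies in `Γ`, and `f (λ(A)) ≤ f (diag (Qᵀ A Q))`
by concavity and symmetry of `f`. Choosing `Q` to diagonalize `a A + b B` gives
`λ(a A + b B) = a diag (Qᵀ A Q) + b diag (Qᵀ B Q)`, and both claims follow from the convexity of `Γ`
and the concavity of `f`.
-/

open Filter Topology Matrix

attribute [local instance] Matrix.normedAddCommGroup Matrix.normedSpace

section Permutations

lemma Matrix.mulVec_mem_convexHull_perm_of_mem_doublyStochastic {ι : Type*} [Fintype ι]
    [DecidableEq ι] {M : Matrix ι ι ℝ} (hM : M ∈ doublyStochastic ℝ ι) (x : ι → ℝ) :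
    M *ᵥ x ∈ convexHull ℝ (Set.range fun σ : Equiv.Perm ι => x ∘ σ) := by
  have hM' : M ∈ convexHull ℝ {σ.permMatrix ℝ | σ : Equiv.Perm ι} :=
    doublyStochastic_eq_convexHull_permMatrix (R := ℝ) (n := ι) ▸ hM
  have hMx := Set.mem_image_of_mem ((mulVecBilin ℝ ℝ).flip x) hM'
  rw [LinearMap.image_convexHull] at hMx
  refine convexHull_mono ?_ hMx
  rintro _ ⟨_, ⟨σ, rfl⟩, rfl⟩
  exact ⟨σ, (permMatrix_mulVec σ).symm⟩

variable {ι : Type*} {Γ : Set (ι → ℝ)}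

lemma convexHull_range_perm_subset (hΓ : Convex ℝ Γ)
    (hΓperm : ∀ σ : Equiv.Perm ι, ∀ x ∈ Γ, x ∘ σ ∈ Γ) {x : ι → ℝ} (hx : x ∈ Γ) :
    convexHull ℝ (Set.range fun σ : Equiv.Perm ι => x ∘ σ) ⊆ Γ :=
  convexHull_min (Set.range_subset_iff.2 fun σ => hΓperm σ x hx) hΓ

lemma ConcaveOn.le_of_mem_convexHull_range_perm {f : (ι → ℝ) → ℝ} (hf : ConcaveOn ℝ Γ f)
    (hΓperm : ∀ σ : Equiv.Perm ι, ∀ x ∈ Γ, x ∘ σ ∈ Γ)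
    (hfsymm : ∀ σ : Equiv.Perm ι, ∀ x ∈ Γ, f (x ∘ σ) = f x) {x y : ι → ℝ} (hx : x ∈ Γ)
    (hy : y ∈ convexHull ℝ (Set.range fun σ : Equiv.Perm ι => x ∘ σ)) :
    f x ≤ f y := by
  obtain ⟨_, ⟨σ, rfl⟩, hσ⟩ :=
    hf.exists_le_of_mem_convexHull (Set.range_subset_iff.2 fun σ => hΓperm σ x hx) hy
  rwa [hfsymm σ x hx] at hσ

end Permutations

section Orthogonal

variable {ι : Type*} [Fintype ι] [DecidableEq ι]

lemma Matrix.sq_apply_mem_doublyStochastic {R : Matrix ι ι ℝ} (hR : R ∈ unitaryGroup ι ℝ) :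
    of (fun i j => R i j ^ 2) ∈ doublyStochastic ℝ ι := by
  rw [mem_doublyStochastic_iff_sum]
  refine ⟨fun i j => sq_nonneg _, fun i => ?_, fun j => ?_⟩
  · simpa [mul_apply, star_apply, sq, one_apply] using
      congrFun (congrFun (mem_unitaryGroup_iff.mp hR) i) i
  · simpa [mul_apply, star_apply, sq, one_apply] using
      congrFun (congrFun (mem_unitaryGroup_iff'.mp hR) j) j

variable {A : Matrix ι ι ℝ}

lemma Matrix.IsHermitian.diag_conj_eq_mulVec_eigenvalues (hA : A.IsHermitian)
    (U : Matrix ι ι ℝ) :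
    (star U * A * U).diag =
      of (fun i j => (star U * hA.eigenvectorUnitary) i j ^ 2) *ᵥ hA.eigenvalues := by
  set R := star U * (hA.eigenvectorUnitary : Matrix ι ι ℝ)
  have hconj : star U * A * U = R * diagonal hA.eigenvalues * star R := by
    conv_lhs => rw [hA.spectral_theorem]
    simp [R, Unitary.conjStarAlgAut_apply, Matrix.mul_assoc]
  ext i
  simp only [hconj, diag_apply, mul_apply, diagonal_apply, star_apply, mulVec, dotProduct,
    of_apply, mul_ite, mul_zero, Finset.sum_ite_eq', Finset.mem_univ, if_true, star_trivial]
  exact Finset.sum_congr rfl fun j _ => by ring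

lemma Matrix.IsHermitian.diag_conj_mem_convexHull (hA : A.IsHermitian) {U : Matrix ι ι ℝ}
    (hU : U ∈ unitaryGroup ι ℝ) :
    (star U * A * U).diag ∈
      convexHull ℝ (Set.range fun σ : Equiv.Perm ι => hA.eigenvalues ∘ σ) := by
  rw [hA.diag_conj_eq_mulVec_eigenvalues]
  refine mulVec_mem_convexHull_perm_of_mem_doublyStochastic
    (sq_apply_mem_doublyStochastic ?_) _
  exact Submonoid.mul_mem _ (Unitary.star_mem_iff.mpr hU) hA.eigenvectorUnitary.2

lemma Matrix.IsHermitian.diag_conj_eigenvectorUnitary (hA : A.IsHermitian) :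
    (star (hA.eigenvectorUnitary : Matrix ι ι ℝ) * A * hA.eigenvectorUnitary).diag =
      hA.eigenvalues := by
  have := hA.conjStarAlgAut_star_eigenvectorUnitary
  simp only [Unitary.conjStarAlgAut_star_apply] at this
  rw [this]
  exact diag_diagonal _

end Orthogonal

lemma eigVec_smul_add_smul {m : ℕ} (A B : SymMat m) (a b : ℝ) :
    ∃ Q ∈ unitaryGroup (Fin m) ℝ, eigVec (a • A + b • B) =
      a • (star Q * (A : Matrix (Fin m) (Fin m) ℝ) * Q).diag +
        b • (star Q * (B : Matrix (Fin m) (Fin m) ℝ) * Q).diag := by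
  have hC := IsSymm.isHermitianR (a • A + b • B).2
  refine ⟨hC.eigenvectorUnitary, hC.eigenvectorUnitary.2, ?_⟩
  rw [eigVec, ← hC.diag_conj_eigenvectorUnitary]
  simp only [Submodule.coe_add, Submodule.coe_smul, Matrix.mul_add, Matrix.add_mul,
    Matrix.mul_smul, Matrix.smul_mul, diag_add, diag_smul]

theorem stmt_14_general (m : ℕ)
    (Γ : Set (Fin m → ℝ)) (hΓconv : Convex ℝ Γ)
    (hΓperm : ∀ π : Equiv.Perm (Fin m), ∀ x ∈ Γ, x ∘ π ∈ Γ)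
    (f : (Fin m → ℝ) → ℝ)
    (hfsymm : ∀ π : Equiv.Perm (Fin m), ∀ x ∈ Γ, f (x ∘ π) = f x)
    (hfconc : ConcaveOn ℝ Γ f) :
    Convex ℝ {A : SymMat m | eigVec A ∈ Γ} ∧
    ConcaveOn ℝ {A : SymMat m | eigVec A ∈ Γ} (fun A => f (eigVec A)) := by
  have hull : ∀ A : SymMat m, ∀ Q ∈ unitaryGroup (Fin m) ℝ,
      (star Q * (A : Matrix (Fin m) (Fin m) ℝ) * Q).diag ∈
        convexHull ℝ (Set.range fun σ : Equiv.Perm (Fin m) => eigVec A ∘ σ) :=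
    fun A _ hQ => (IsSymm.isHermitianR A.2).diag_conj_mem_convexHull hQ
  have diag_mem : ∀ A : SymMat m, eigVec A ∈ Γ → ∀ Q ∈ unitaryGroup (Fin m) ℝ,
      (star Q * (A : Matrix (Fin m) (Fin m) ℝ) * Q).diag ∈ Γ :=
    fun A hA Q hQ => convexHull_range_perm_subset hΓconv hΓperm hA (hull A Q hQ)
  have hS : Convex ℝ {A : SymMat m | eigVec A ∈ Γ} := by
    intro A hA B hB a b ha hb hab
    obtain ⟨Q, hQ, hdecomp⟩ := eigVec_smul_add_smul A B a b
    show eigVec _ ∈ Γ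
    rw [hdecomp]
    exact hΓconv (diag_mem A hA Q hQ) (diag_mem B hB Q hQ) ha hb hab
  refine ⟨hS, hS, fun A hA B hB a b ha hb hab => ?_⟩
  obtain ⟨Q, hQ, hdecomp⟩ := eigVec_smul_add_smul A B a b
  calc a • f (eigVec A) + b • f (eigVec B)
      ≤ a • f (star Q * (A : Matrix (Fin m) (Fin m) ℝ) * Q).diag +
          b • f (star Q * (B : Matrix (Fin m) (Fin m) ℝ) * Q).diag := by
        gcongr
        exacts [hfconc.le_of_mem_convexHull_range_perm hΓperm hfsymm hA (hull A Q hQ),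
          hfconc.le_of_mem_convexHull_range_perm hΓperm hfsymm hB (hull B Q hQ)]
    _ ≤ f (eigVec (a • A + b • B)) := by
        rw [hdecomp]
        exact hfconc.2 (diag_mem A hA Q hQ) (diag_mem B hB Q hQ) ha hb hab

/-- if `Γ ⊆ ℝ^m` is convex and permutation-invariant and `f : Γ → ℝ` is a
symmetric concave function, then `S = {A ∈ Sym_m : λ(A) ∈ Γ}` is convex and
`F(A) = f(λ(A))` is concave on `S`. -/
theorem stmt_14 (m : ℕ) (hm : 2 ≤ m)
    (Γ : Set (Fin m → ℝ)) (hΓconv : Convex ℝ Γ)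
    (hΓperm : ∀ π : Equiv.Perm (Fin m), ∀ x ∈ Γ, x ∘ π ∈ Γ)
    (f : (Fin m → ℝ) → ℝ)
    (hfsymm : ∀ π : Equiv.Perm (Fin m), ∀ x ∈ Γ, f (x ∘ π) = f x)
    (hfconc : ConcaveOn ℝ Γ f) :
    Convex ℝ {A : SymMat m | eigVec A ∈ Γ} ∧
    ConcaveOn ℝ {A : SymMat m | eigVec A ∈ Γ} (fun A => f (eigVec A)) :=
  stmt_14_general m Γ hΓconv hΓperm f hfsymm hfconc
end
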